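/- arXiv:2005.05934 — 3 statements merged into one kernel-verified Lean document; each statement's English description precedes it below -/
import Mathlib

section
/- HyperQPTL is at least as expressive as FO[<,E]: for every closed FO[<,E] formula φ there exists a HyperQPTL formula ψ such that for every trace set T, T ⊨ φ if and only if T ⊨ ψ. -/
set_option linter.unusedVariables false

/-- A trace over a set `AP` of atomic propositions: an infinite sequence of subsets of `AP`. -/
abbrev Trace (AP : Type) := ℕ → Set AP

/-! ### HyperQPTL -/

inductive HQPTL (AP : Type) : Type
  | atom  : AP → ℕ → HQPTL AP          -- a_π
  | prop  : ℕ → HQPTL AP               -- q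
  | not   : HQPTL AP → HQPTL AP
  | or    : HQPTL AP → HQPTL AP → HQPTL AP
  | next  : HQPTL AP → HQPTL AP
  | untl  : HQPTL AP → HQPTL AP → HQPTL AP
  | exTr  : ℕ → HQPTL AP → HQPTL AP    -- ∃π
  | allTr : ℕ → HQPTL AP → HQPTL AP    -- ∀π
  | exPr  : ℕ → HQPTL AP → HQPTL AP    -- ∃q
  | allPr : ℕ → HQPTL AP → HQPTL AP    -- ∀q

namespace HQPTL

variable {AP : Type}

/-- Satisfaction `Π,i ⊨_T φ` for HyperQPTL.  `V` assigns traces (in `T`) to trace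
variables, `P` assigns to each propositional variable a trace over `{q}`
(modelled as `ℕ → Prop`). -/
def sat (T : Set (Trace AP)) : (ℕ → Trace AP) → (ℕ → ℕ → Prop) → ℕ → HQPTL AP → Prop
  | V, P, i, atom a π => a ∈ V π i
  | V, P, i, prop q => P q i
  | V, P, i, not φ => ¬ sat T V P i φ
  | V, P, i, or φ ψ => sat T V P i φ ∨ sat T V P i ψ
  | V, P, i, next φ => sat T V P (i + 1) φ
  | V, P, i, untl φ ψ =>
      ∃ j, i ≤ j ∧ sat T V P j ψ ∧ ∀ k, i ≤ k → k < j → sat T V P k φ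
  | V, P, i, exTr π φ => ∃ t ∈ T, sat T (Function.update V π t) P i φ
  | V, P, i, allTr π φ => ∀ t ∈ T, sat T (Function.update V π t) P i φ
  | V, P, i, exPr q φ => ∃ p : ℕ → Prop, sat T V (Function.update P q p) i φ
  | V, P, i, allPr q φ => ∀ p : ℕ → Prop, sat T V (Function.update P q p) i φ

/-- `T ⊨ φ`: satisfaction at time 0 with the empty (default) assignment. -/
def models (T : Set (Trace AP)) (φ : HQPTL AP) : Prop :=
  sat T (fun _ _ => (∅ : Set AP)) (fun _ _ => False) 0 φ

/-- quantifier-free HyperQPTL formulas -/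
def qfree : HQPTL AP → Prop
  | atom _ _ => True
  | prop _ => True
  | not φ => qfree φ
  | or φ ψ => qfree φ ∧ qfree ψ
  | next φ => qfree φ
  | untl φ ψ => qfree φ ∧ qfree ψ
  | _ => False

/-- prenex form: a prefix of (trace or propositional) quantifiers followed by a
quantifier-free body; this is exactly the shape of formulas produced by the
HyperQPTL grammar. -/
def prenex : HQPTL AP → Prop
  | exTr _ φ => prenex φ
  | allTr _ φ => prenex φ
  | exPr _ φ => prenex φ
  | allPr _ φ => prenex φ
  | φ => qfree φ

/-- the ∀* fragment: only universal trace quantifiers in the prefix,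
propositional quantifiers may occur arbitrarily in the prefix. -/
def allFrag : HQPTL AP → Prop
  | allTr _ φ => allFrag φ
  | exPr _ φ => allFrag φ
  | allPr _ φ => allFrag φ
  | φ => qfree φ

/-- trailing block `Q⃗₂ ψ` of propositional quantifiers over a quantifier-free body -/
def eaFrag4 : HQPTL AP → Prop
  | exPr _ φ => eaFrag4 φ
  | allPr _ φ => eaFrag4 φ
  | φ => qfree φ

/-- `∀π′₁…∀π′ₘ Q⃗₂ ψ` -/
def eaFrag3 : HQPTL AP → Prop
  | allTr _ φ => eaFrag3 φ
  | φ => eaFrag4 φ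

/-- `Q⃗₁ ∀π′₁…∀π′ₘ Q⃗₂ ψ` -/
def eaFrag2 : HQPTL AP → Prop
  | exPr _ φ => eaFrag2 φ
  | allPr _ φ => eaFrag2 φ
  | φ => eaFrag3 φ

/-- `∃π₁…∃πₙ Q⃗₁ ∀π′₁…∀π′ₘ Q⃗₂ ψ` -/
def eaFrag1 : HQPTL AP → Prop
  | exTr _ φ => eaFrag1 φ
  | φ => eaFrag2 φ

/-- the ∃*∀* fragment: `Q⃗₀ ∃π₁…∃πₙ Q⃗₁ ∀π′₁…∀π′ₘ Q⃗₂ ψ` with `ψ` quantifier-free -/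
def eaFrag : HQPTL AP → Prop
  | exPr _ φ => eaFrag φ
  | allPr _ φ => eaFrag φ
  | φ => eaFrag1 φ

/-- a HyperQPTL formula is satisfiable if some nonempty trace set satisfies it -/
def satisfiable (φ : HQPTL AP) : Prop :=
  ∃ T : Set (Trace AP), T.Nonempty ∧ models T φ

/-- a natural injective encoding of HyperQPTL formulas over `Fin k` as naturals -/
def enc {k : ℕ} : HQPTL (Fin k) → ℕ
  | atom a π => Nat.pair 0 (Nat.pair a.val π)
  | prop q => Nat.pair 1 q
  | not φ => Nat.pair 2 (enc φ)
  | or φ ψ => Nat.pair 3 (Nat.pair (enc φ) (enc ψ))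
  | next φ => Nat.pair 4 (enc φ)
  | untl φ ψ => Nat.pair 5 (Nat.pair (enc φ) (enc ψ))
  | exTr π φ => Nat.pair 6 (Nat.pair π (enc φ))
  | allTr π φ => Nat.pair 7 (Nat.pair π (enc φ))
  | exPr q φ => Nat.pair 8 (Nat.pair q (enc φ))
  | allPr q φ => Nat.pair 9 (Nat.pair q (enc φ))

end HQPTL

/-! ### QPTL -/

inductive QPTL (AP : Type) : Type
  | atom  : AP → QPTL AP
  | prop  : ℕ → QPTL AP
  | not   : QPTL AP → QPTL AP
  | or    : QPTL AP → QPTL AP → QPTL AP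
  | next  : QPTL AP → QPTL AP
  | untl  : QPTL AP → QPTL AP → QPTL AP
  | exPr  : ℕ → QPTL AP → QPTL AP
  | allPr : ℕ → QPTL AP → QPTL AP

namespace QPTL

variable {AP : Type}

/-- QPTL satisfaction over a single trace `t`. -/
def sat (t : Trace AP) : (ℕ → ℕ → Prop) → ℕ → QPTL AP → Prop
  | P, i, atom a => a ∈ t i
  | P, i, prop q => P q i
  | P, i, not φ => ¬ sat t P i φ
  | P, i, or φ ψ => sat t P i φ ∨ sat t P i ψ
  | P, i, next φ => sat t P (i + 1) φ
  | P, i, untl φ ψ => ∃ j, i ≤ j ∧ sat t P j ψ ∧ ∀ k, i ≤ k → k < j → sat t P k φ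
  | P, i, exPr q φ => ∃ p : ℕ → Prop, sat t (Function.update P q p) i φ
  | P, i, allPr q φ => ∀ p : ℕ → Prop, sat t (Function.update P q p) i φ

def models (t : Trace AP) (φ : QPTL AP) : Prop :=
  sat t (fun _ _ => False) 0 φ

def satisfiable (φ : QPTL AP) : Prop := ∃ t : Trace AP, models t φ

end QPTL

/-- The QPTL formula obtained from a HyperQPTL formula by removing all trace
quantifiers and replacing every atom `a_π` by the atom `a`. -/
def HQPTL.strip {AP : Type} : HQPTL AP → QPTL AP
  | .atom a _ => .atom a
  | .prop q => .prop q
  | .not φ => .not φ.strip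
  | .or φ ψ => .or φ.strip ψ.strip
  | .next φ => .next φ.strip
  | .untl φ ψ => .untl φ.strip ψ.strip
  | .exTr _ φ => φ.strip
  | .allTr _ φ => φ.strip
  | .exPr q φ => .exPr q φ.strip
  | .allPr q φ => .allPr q φ.strip

/-! ### FO[<,E] -/

inductive FOE (AP : Type) : Type
  | patom : AP → ℕ → FOE AP            -- P_a(x)
  | lt    : ℕ → ℕ → FOE AP             -- x < y
  | eq    : ℕ → ℕ → FOE AP             -- x = y
  | el    : ℕ → ℕ → FOE AP             -- E(x,y)
  | not   : FOE AP → FOE AP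
  | or    : FOE AP → FOE AP → FOE AP
  | ex    : ℕ → FOE AP → FOE AP        -- ∃x

namespace FOE

variable {AP : Type}

/-- First-order satisfaction over a trace set `T`; first-order variables range
over `T × ℕ`, modelled by valuations `v : ℕ → Trace AP × ℕ` (quantifiers
restrict the first component to `T`). -/
def sat (T : Set (Trace AP)) : (ℕ → Trace AP × ℕ) → FOE AP → Prop
  | v, patom a x => a ∈ (v x).1 (v x).2
  | v, lt x y => (v x).1 = (v y).1 ∧ (v x).2 < (v y).2
  | v, eq x y => v x = v y
  | v, el x y => (v x).2 = (v y).2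
  | v, not φ => ¬ sat T v φ
  | v, or φ ψ => sat T v φ ∨ sat T v ψ
  | v, ex x φ => ∃ p : Trace AP × ℕ, p.1 ∈ T ∧ sat T (Function.update v x p) φ

def free : FOE AP → Finset ℕ
  | patom _ x => {x}
  | lt x y => {x, y}
  | eq x y => {x, y}
  | el x y => {x, y}
  | not φ => free φ
  | or φ ψ => free φ ∪ free ψ
  | ex x φ => (free φ).erase x

def closed (φ : FOE AP) : Prop := φ.free = ∅

def models (T : Set (Trace AP)) (φ : FOE AP) : Prop :=
  sat T (fun _ => (fun _ => (∅ : Set AP), 0)) φ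

end FOE

/-! ### S1S[E] -/

inductive S1STerm : Type
  | var  : ℕ → S1STerm
  | min  : ℕ → S1STerm
  | succ : S1STerm → S1STerm

namespace S1STerm

/-- value of an S1S[E] term under a first-order valuation -/
def val {AP : Type} (v : ℕ → Trace AP × ℕ) : S1STerm → Trace AP × ℕ
  | var x => v x
  | min x => ((v x).1, 0)
  | succ τ => ((val v τ).1, (val v τ).2 + 1)

def fv : S1STerm → Finset ℕ
  | var x => {x}
  | min x => {x}
  | succ τ => fv τ

def enc : S1STerm → ℕ
  | var x => Nat.pair 0 x
  | min x => Nat.pair 1 x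
  | succ τ => Nat.pair 2 τ.enc

end S1STerm

/-- S1S[E] formulas: second-order variables are either quantifiable variables
(indexed by `ℕ`, via `Sum.inl`) or the designated free variables `X_a`
for `a ∈ AP` (via `Sum.inr`). -/
inductive S1SE (AP : Type) : Type
  | mem  : S1STerm → ℕ ⊕ AP → S1SE AP   -- τ ∈ X
  | eq   : S1STerm → S1STerm → S1SE AP   -- τ = τ'
  | el   : S1STerm → S1STerm → S1SE AP   -- E(τ,τ')
  | not  : S1SE AP → S1SE AP
  | or   : S1SE AP → S1SE AP → S1SE AP
  | exFO : ℕ → S1SE AP → S1SE AP         -- ∃x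
  | exSO : ℕ → S1SE AP → S1SE AP         -- ∃X

namespace S1SE

variable {AP : Type}

/-- S1S[E] satisfaction over a trace set `T`: first-order variables range over
`T × ℕ`, second-order variables over subsets of `T × ℕ`; each designated
variable `X_a` is interpreted as `{(t,n) ∈ T × ℕ | a ∈ t[n]}`. -/
def sat (T : Set (Trace AP)) :
    (ℕ → Trace AP × ℕ) → (ℕ → Set (Trace AP × ℕ)) → S1SE AP → Prop
  | v1, v2, mem τ (Sum.inl X) => τ.val v1 ∈ v2 X
  | v1, v2, mem τ (Sum.inr a) =>
      (τ.val v1).1 ∈ T ∧ a ∈ (τ.val v1).1 (τ.val v1).2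
  | v1, v2, eq τ σ => τ.val v1 = σ.val v1
  | v1, v2, el τ σ => (τ.val v1).2 = (σ.val v1).2
  | v1, v2, not φ => ¬ sat T v1 v2 φ
  | v1, v2, or φ ψ => sat T v1 v2 φ ∨ sat T v1 v2 ψ
  | v1, v2, exFO x φ =>
      ∃ p : Trace AP × ℕ, p.1 ∈ T ∧ sat T (Function.update v1 x p) v2 φ
  | v1, v2, exSO X φ =>
      ∃ A : Set (Trace AP × ℕ), (∀ p ∈ A, p.1 ∈ T) ∧
        sat T v1 (Function.update v2 X A) φ

def freeFO : S1SE AP → Finset ℕ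
  | mem τ _ => τ.fv
  | eq τ σ => τ.fv ∪ σ.fv
  | el τ σ => τ.fv ∪ σ.fv
  | not φ => freeFO φ
  | or φ ψ => freeFO φ ∪ freeFO ψ
  | exFO x φ => (freeFO φ).erase x
  | exSO _ φ => freeFO φ

def freeSO : S1SE AP → Finset ℕ
  | mem _ (Sum.inl X) => {X}
  | mem _ (Sum.inr _) => ∅
  | eq _ _ => ∅
  | el _ _ => ∅
  | not φ => freeSO φ
  | or φ ψ => freeSO φ ∪ freeSO ψ
  | exFO _ φ => freeSO φ
  | exSO X φ => (freeSO φ).erase X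

/-- a closed S1S[E] formula: free variables only among the `X_a` -/
def closed (φ : S1SE AP) : Prop := φ.freeFO = ∅ ∧ φ.freeSO = ∅

def models (T : Set (Trace AP)) (φ : S1SE AP) : Prop :=
  sat T (fun _ => (fun _ => (∅ : Set AP), 0)) (fun _ => (∅ : Set (Trace AP × ℕ))) φ

/-- a natural injective encoding of S1S[E] formulas over `Fin k` as naturals -/
def enc {k : ℕ} : S1SE (Fin k) → ℕ
  | mem τ (Sum.inl X) => Nat.pair 0 (Nat.pair τ.enc X)
  | mem τ (Sum.inr a) => Nat.pair 1 (Nat.pair τ.enc a.val)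
  | eq τ σ => Nat.pair 2 (Nat.pair τ.enc σ.enc)
  | el τ σ => Nat.pair 3 (Nat.pair τ.enc σ.enc)
  | not φ => Nat.pair 4 φ.enc
  | or φ ψ => Nat.pair 5 (Nat.pair φ.enc ψ.enc)
  | exFO x φ => Nat.pair 6 (Nat.pair x φ.enc)
  | exSO X φ => Nat.pair 7 (Nat.pair X φ.enc)

end S1SE

/-! ### Labeled trees -/

/-- An `AP`-labeled tree: an infinite partially ordered set of nodes (given by
the strict ancestor relation `lt`) with a least element `root`, in which the
ancestors of every node are totally ordered and finitely many (so that levels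
are defined), and every node has a direct successor. -/
structure LTree (AP : Type) : Type 1 where
  node : Type
  lt : node → node → Prop
  lt_irrefl : ∀ s, ¬ lt s s
  lt_trans : ∀ a b c, lt a b → lt b c → lt a c
  root : node
  root_min : ∀ s, s = root ∨ lt root s
  anc_total : ∀ s a b, lt a s → lt b s → a = b ∨ lt a b ∨ lt b a
  anc_finite : ∀ s, {a | lt a s}.Finite
  succ_exists : ∀ s, ∃ s', lt s s' ∧ ¬ ∃ c, lt s c ∧ lt c s'
  label : node → Set AP

namespace LTree

variable {AP : Type} (T : LTree AP)

/-- `a` is the direct ancestor of `b` -/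
def DirAnc (a b : T.node) : Prop := T.lt a b ∧ ¬ ∃ c, T.lt a c ∧ T.lt c b

/-- a path: an infinite sequence of nodes, each the direct ancestor of the next -/
def IsPath (p : ℕ → T.node) : Prop := ∀ i, T.DirAnc (p i) (p (i + 1))

/-- an initial path: a path starting at the root -/
def InitPath (p : ℕ → T.node) : Prop := T.IsPath p ∧ p 0 = T.root

/-- the level of a node: its number of ancestors -/
noncomputable def level (s : T.node) : ℕ := (T.anc_finite s).toFinset.card

/-- the collection of node sets that constitute exactly one initial infinite
path of the tree -/
def pathSets : Set (Set T.node) :=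
  { A | ∃ p : ℕ → T.node, T.InitPath p ∧ A = Set.range p }

end LTree

/-- Bisimilarity of `AP`-labeled trees. -/
def Bisimilar {AP : Type} (T₁ T₂ : LTree AP) : Prop :=
  ∃ R : T₁.node → T₂.node → Prop,
    R T₁.root T₂.root ∧
    ∀ s u, R s u →
      T₁.label s = T₂.label u ∧
      (∀ s', T₁.DirAnc s s' → ∃ u', T₂.DirAnc u u' ∧ R s' u') ∧
      (∀ u', T₂.DirAnc u u' → ∃ s', T₁.DirAnc s s' ∧ R s' u')

/-! ### HyperCTL* -/

inductive HCTL (AP : Type) : Type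
  | atom : AP → ℕ → HCTL AP           -- a_π
  | not  : HCTL AP → HCTL AP
  | or   : HCTL AP → HCTL AP → HCTL AP
  | next : HCTL AP → HCTL AP
  | untl : HCTL AP → HCTL AP → HCTL AP
  | ex   : ℕ → HCTL AP → HCTL AP      -- ∃π

namespace HCTL

variable {AP : Type}

/-- HyperCTL* satisfaction `Π,i ⊨_T φ`: `V` assigns initial paths to path
variables, `ε` is the most recently assigned path. -/
def sat (T : LTree AP) : (ℕ → ℕ → T.node) → (ℕ → T.node) → ℕ → HCTL AP → Prop
  | V, ε, i, atom a π => a ∈ T.label (V π i)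
  | V, ε, i, not φ => ¬ sat T V ε i φ
  | V, ε, i, or φ ψ => sat T V ε i φ ∨ sat T V ε i ψ
  | V, ε, i, next φ => sat T V ε (i + 1) φ
  | V, ε, i, untl φ ψ =>
      ∃ j, i ≤ j ∧ sat T V ε j ψ ∧ ∀ k, i ≤ k → k < j → sat T V ε k φ
  | V, ε, i, ex π φ =>
      ∃ p : ℕ → T.node, T.InitPath p ∧ (∀ j ≤ i, p j = ε j) ∧
        sat T (Function.update V π p) p i φ

/-- `T ⊨ φ` -/
def models (T : LTree AP) (φ : HCTL AP) : Prop :=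
  ∀ p : ℕ → T.node, T.InitPath p → sat T (fun _ => p) p 0 φ

def satisfiable (φ : HCTL AP) : Prop := ∃ T : LTree AP, models T φ

def qfree : HCTL AP → Prop
  | atom _ _ => True
  | not φ => qfree φ
  | or φ ψ => qfree φ ∧ qfree ψ
  | next φ => qfree φ
  | untl φ ψ => qfree φ ∧ qfree ψ
  | ex _ _ => False

/-- a natural injective encoding of HyperCTL* formulas over `Fin k` -/
def enc {k : ℕ} : HCTL (Fin k) → ℕ
  | atom a π => Nat.pair 0 (Nat.pair a.val π)
  | not φ => Nat.pair 1 φ.enc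
  | or φ ψ => Nat.pair 2 (Nat.pair φ.enc ψ.enc)
  | next φ => Nat.pair 3 φ.enc
  | untl φ ψ => Nat.pair 4 (Nat.pair φ.enc ψ.enc)
  | ex π φ => Nat.pair 5 (Nat.pair π φ.enc)

end HCTL

/-! ### HyperCTL* in negation normal form -/

inductive NHCTL (AP : Type) : Type
  | pos  : AP → ℕ → NHCTL AP           -- a_π
  | neg  : AP → ℕ → NHCTL AP           -- ¬a_π
  | and  : NHCTL AP → NHCTL AP → NHCTL AP
  | or   : NHCTL AP → NHCTL AP → NHCTL AP
  | next : NHCTL AP → NHCTL AP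
  | untl : NHCTL AP → NHCTL AP → NHCTL AP
  | rel  : NHCTL AP → NHCTL AP → NHCTL AP   -- release
  | ex   : ℕ → NHCTL AP → NHCTL AP
  | all  : ℕ → NHCTL AP → NHCTL AP

namespace NHCTL

variable {AP : Type}

def sat (T : LTree AP) : (ℕ → ℕ → T.node) → (ℕ → T.node) → ℕ → NHCTL AP → Prop
  | V, ε, i, pos a π => a ∈ T.label (V π i)
  | V, ε, i, neg a π => a ∉ T.label (V π i)
  | V, ε, i, and φ ψ => sat T V ε i φ ∧ sat T V ε i ψ
  | V, ε, i, or φ ψ => sat T V ε i φ ∨ sat T V ε i ψ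
  | V, ε, i, next φ => sat T V ε (i + 1) φ
  | V, ε, i, untl φ ψ =>
      ∃ j, i ≤ j ∧ sat T V ε j ψ ∧ ∀ k, i ≤ k → k < j → sat T V ε k φ
  | V, ε, i, rel φ ψ =>
      (∀ j, i ≤ j → sat T V ε j ψ) ∨
      ∃ j, i ≤ j ∧ sat T V ε j φ ∧ ∀ k, i ≤ k → k ≤ j → sat T V ε k ψ
  | V, ε, i, ex π φ =>
      ∃ p : ℕ → T.node, T.InitPath p ∧ (∀ j ≤ i, p j = ε j) ∧
        sat T (Function.update V π p) p i φ
  | V, ε, i, all π φ =>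
      ∀ p : ℕ → T.node, T.InitPath p → (∀ j ≤ i, p j = ε j) →
        sat T (Function.update V π p) p i φ

def models (T : LTree AP) (φ : NHCTL AP) : Prop :=
  ∀ p : ℕ → T.node, T.InitPath p → sat T (fun _ => p) p 0 φ

def satisfiable (φ : NHCTL AP) : Prop := ∃ T : LTree AP, models T φ

/-- contains no existential path quantifier -/
def noEx : NHCTL AP → Prop
  | pos _ _ => True
  | neg _ _ => True
  | and φ ψ => noEx φ ∧ noEx ψ
  | or φ ψ => noEx φ ∧ noEx ψ
  | next φ => noEx φ
  | untl φ ψ => noEx φ ∧ noEx ψ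
  | rel φ ψ => noEx φ ∧ noEx ψ
  | ex _ _ => False
  | all _ φ => noEx φ

/-- contains no universal path quantifier -/
def noAll : NHCTL AP → Prop
  | pos _ _ => True
  | neg _ _ => True
  | and φ ψ => noAll φ ∧ noAll ψ
  | or φ ψ => noAll φ ∧ noAll ψ
  | next φ => noAll φ
  | untl φ ψ => noAll φ ∧ noAll ψ
  | rel φ ψ => noAll φ ∧ noAll ψ
  | ex _ φ => noAll φ
  | all _ _ => False

/-- quantifier-free -/
def qf : NHCTL AP → Prop
  | pos _ _ => True
  | neg _ _ => True
  | and φ ψ => qf φ ∧ qf ψ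
  | or φ ψ => qf φ ∧ qf ψ
  | next φ => qf φ
  | untl φ ψ => qf φ ∧ qf ψ
  | rel φ ψ => qf φ ∧ qf ψ
  | ex _ _ => False
  | all _ _ => False

/-- the ∃*∀* fragment: no existential path quantifier occurs in the scope of a
universal path quantifier -/
def eaFrag : NHCTL AP → Prop
  | pos _ _ => True
  | neg _ _ => True
  | and φ ψ => eaFrag φ ∧ eaFrag ψ
  | or φ ψ => eaFrag φ ∧ eaFrag ψ
  | next φ => eaFrag φ
  | untl φ ψ => eaFrag φ ∧ eaFrag ψ
  | rel φ ψ => eaFrag φ ∧ eaFrag ψ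
  | ex _ φ => eaFrag φ
  | all _ φ => noEx φ

/-- a natural injective encoding of NNF HyperCTL* formulas over `Fin k` -/
def enc {k : ℕ} : NHCTL (Fin k) → ℕ
  | pos a π => Nat.pair 0 (Nat.pair a.val π)
  | neg a π => Nat.pair 1 (Nat.pair a.val π)
  | and φ ψ => Nat.pair 2 (Nat.pair φ.enc ψ.enc)
  | or φ ψ => Nat.pair 3 (Nat.pair φ.enc ψ.enc)
  | next φ => Nat.pair 4 φ.enc
  | untl φ ψ => Nat.pair 5 (Nat.pair φ.enc ψ.enc)
  | rel φ ψ => Nat.pair 6 (Nat.pair φ.enc ψ.enc)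
  | ex π φ => Nat.pair 7 (Nat.pair π φ.enc)
  | all π φ => Nat.pair 8 (Nat.pair π φ.enc)

end NHCTL

/-! ### MSO[E] and MPL[E] over labeled trees -/

inductive MSOE (AP : Type) : Type
  | patom : AP → ℕ → MSOE AP           -- P_a(x)
  | lt    : ℕ → ℕ → MSOE AP            -- x < y  (proper ancestor)
  | eq    : ℕ → ℕ → MSOE AP            -- x = y
  | el    : ℕ → ℕ → MSOE AP            -- E(x,y)
  | mem   : ℕ → ℕ → MSOE AP            -- x ∈ X
  | not   : MSOE AP → MSOE AP
  | or    : MSOE AP → MSOE AP → MSOE AP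
  | exFO  : ℕ → MSOE AP → MSOE AP      -- ∃x
  | exSO  : ℕ → MSOE AP → MSOE AP      -- ∃X

namespace MSOE

variable {AP : Type}

/-- satisfaction over a labeled tree, where second-order quantifiers range over
the collection `SO` of admissible node sets -/
def sat (T : LTree AP) (SO : Set (Set T.node)) :
    (ℕ → T.node) → (ℕ → Set T.node) → MSOE AP → Prop
  | v1, v2, patom a x => a ∈ T.label (v1 x)
  | v1, v2, lt x y => T.lt (v1 x) (v1 y)
  | v1, v2, eq x y => v1 x = v1 y
  | v1, v2, el x y => T.level (v1 x) = T.level (v1 y)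
  | v1, v2, mem x X => v1 x ∈ v2 X
  | v1, v2, not φ => ¬ sat T SO v1 v2 φ
  | v1, v2, or φ ψ => sat T SO v1 v2 φ ∨ sat T SO v1 v2 ψ
  | v1, v2, exFO x φ => ∃ s : T.node, sat T SO (Function.update v1 x s) v2 φ
  | v1, v2, exSO X φ => ∃ A ∈ SO, sat T SO v1 (Function.update v2 X A) φ

def freeFO : MSOE AP → Finset ℕ
  | patom _ x => {x}
  | lt x y => {x, y}
  | eq x y => {x, y}
  | el x y => {x, y}
  | mem x _ => {x}
  | not φ => freeFO φ
  | or φ ψ => freeFO φ ∪ freeFO ψ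
  | exFO x φ => (freeFO φ).erase x
  | exSO _ φ => freeFO φ

def freeSO : MSOE AP → Finset ℕ
  | patom _ _ => ∅
  | lt _ _ => ∅
  | eq _ _ => ∅
  | el _ _ => ∅
  | mem _ X => {X}
  | not φ => freeSO φ
  | or φ ψ => freeSO φ ∪ freeSO ψ
  | exFO _ φ => freeSO φ
  | exSO X φ => (freeSO φ).erase X

def closed (φ : MSOE AP) : Prop := φ.freeFO = ∅ ∧ φ.freeSO = ∅

/-- `T ⊨ φ` with MPL[E] semantics: second-order quantification restricted to
sets of nodes constituting exactly one initial infinite path -/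
def modelsMPL (T : LTree AP) (φ : MSOE AP) : Prop :=
  sat T T.pathSets (fun _ => T.root) (fun _ => (∅ : Set T.node)) φ

/-- `T ⊨ φ` with full MSO[E] semantics: second-order quantification over
arbitrary sets of nodes -/
def modelsMSO (T : LTree AP) (φ : MSOE AP) : Prop :=
  sat T Set.univ (fun _ => T.root) (fun _ => (∅ : Set T.node)) φ

end MSOE

/-! ### HyperQCTL* -/

inductive HQCTL (AP : Type) : Type
  | atom  : AP → ℕ → HQCTL AP          -- a_π
  | qatom : ℕ → ℕ → HQCTL AP           -- q_π
  | not   : HQCTL AP → HQCTL AP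
  | or    : HQCTL AP → HQCTL AP → HQCTL AP
  | next  : HQCTL AP → HQCTL AP
  | untl  : HQCTL AP → HQCTL AP → HQCTL AP
  | ex    : ℕ → HQCTL AP → HQCTL AP    -- ∃π
  | exPr  : ℕ → HQCTL AP → HQCTL AP    -- ∃q

namespace HQCTL

variable {AP : Type}

/-- HyperQCTL* satisfaction: `Q` records, for every quantified proposition, the
set of tree nodes currently labeled by it (a relabeling of the tree). -/
def sat (T : LTree AP) : (ℕ → Set T.node) → (ℕ → ℕ → T.node) → (ℕ → T.node) →
    ℕ → HQCTL AP → Prop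
  | Q, V, ε, i, atom a π => a ∈ T.label (V π i)
  | Q, V, ε, i, qatom q π => V π i ∈ Q q
  | Q, V, ε, i, not φ => ¬ sat T Q V ε i φ
  | Q, V, ε, i, or φ ψ => sat T Q V ε i φ ∨ sat T Q V ε i ψ
  | Q, V, ε, i, next φ => sat T Q V ε (i + 1) φ
  | Q, V, ε, i, untl φ ψ =>
      ∃ j, i ≤ j ∧ sat T Q V ε j ψ ∧ ∀ k, i ≤ k → k < j → sat T Q V ε k φ
  | Q, V, ε, i, ex π φ =>
      ∃ p : ℕ → T.node, T.InitPath p ∧ (∀ j ≤ i, p j = ε j) ∧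
        sat T Q (Function.update V π p) p i φ
  | Q, V, ε, i, exPr q φ =>
      ∃ A : Set T.node, sat T (Function.update Q q A) V ε i φ

def models (T : LTree AP) (φ : HQCTL AP) : Prop :=
  ∀ p : ℕ → T.node, T.InitPath p →
    sat T (fun _ => (∅ : Set T.node)) (fun _ => p) p 0 φ

end HQCTL

namespace Sub0
open HQPTL

variable {AP : Type}

/-! Derived connectives -/

def htt : HQPTL AP := .or (.prop 0) (.not (.prop 0))
def hand (a b : HQPTL AP) : HQPTL AP := .not (.or (.not a) (.not b))
def hiff (a b : HQPTL AP) : HQPTL AP := .or (hand a b) (hand (.not a) (.not b))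
def hF (a : HQPTL AP) : HQPTL AP := .untl htt a
def hG (a : HQPTL AP) : HQPTL AP := .not (hF (.not a))
def conjL : List (HQPTL AP) → HQPTL AP
  | [] => htt
  | a :: l => hand a (conjL l)
def sing (q : ℕ) : HQPTL AP :=
  .untl (.not (.prop q)) (hand (.prop q) (.not (.next (hF (.prop q)))))
noncomputable def sameTr [Fintype AP] (i j : ℕ) : HQPTL AP :=
  hG (conjL ((Finset.univ : Finset AP).toList.map (fun a => hiff (.atom a i) (.atom a j))))

section SatLemmas
variable {T : Set (Trace AP)} {V : ℕ → Trace AP} {P : ℕ → ℕ → Prop} {i : ℕ}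

@[simp] lemma sat_htt : sat T V P i (htt (AP := AP)) := by
  simp [htt, sat]; tauto

@[simp] lemma sat_hand {a b : HQPTL AP} :
    sat T V P i (hand a b) ↔ sat T V P i a ∧ sat T V P i b := by
  simp [hand, sat]

@[simp] lemma sat_hiff {a b : HQPTL AP} :
    sat T V P i (hiff a b) ↔ (sat T V P i a ↔ sat T V P i b) := by
  simp [hiff, sat]; tauto

lemma sat_hF {a : HQPTL AP} :
    sat T V P i (hF a) ↔ ∃ j, i ≤ j ∧ sat T V P j a := by
  simp only [hF, sat]
  constructor
  · rintro ⟨j, h1, h2, -⟩; exact ⟨j, h1, h2⟩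
  · rintro ⟨j, h1, h2⟩; exact ⟨j, h1, h2, fun k _ _ => (sat_htt : sat T V P k htt)⟩

lemma sat_hG {a : HQPTL AP} :
    sat T V P i (hG a) ↔ ∀ j, i ≤ j → sat T V P j a := by
  simp [hG, hF, sat]

lemma sat_conjL {l : List (HQPTL AP)} :
    sat T V P i (conjL l) ↔ ∀ a ∈ l, sat T V P i a := by
  induction l with
  | nil => simp [conjL]
  | cons a l ih => simp [conjL, ih]

lemma sat_sing {q : ℕ} :
    sat T V P 0 (sing q) ↔ ∃ j, ∀ k, P q k ↔ k = j := by
  have hnx : ∀ j, sat T V P j (HQPTL.not (.next (hF (.prop q)))) ↔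
      ∀ k, j + 1 ≤ k → ¬ P q k := by
    intro j
    have h0 : sat T V P j (HQPTL.not (.next (hF (.prop q)))) ↔
        ¬ sat T V P (j + 1) (hF (.prop q)) := Iff.rfl
    rw [h0, sat_hF]
    push_neg
    exact Iff.rfl
  have huntl : sat T V P 0 (sing q) ↔
      ∃ j, 0 ≤ j ∧ sat T V P j (hand (.prop q) (.not (.next (hF (.prop q))))) ∧
        ∀ k, 0 ≤ k → k < j → sat T V P k (HQPTL.not (.prop q)) := by
    simp only [sing, sat]
  rw [huntl]
  constructor
  · rintro ⟨j, -, hj, hlt⟩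
    rw [sat_hand, hnx] at hj
    obtain ⟨hq, hno⟩ := hj
    have hq : P q j := hq
    refine ⟨j, fun k => ⟨fun hk => ?_, fun hk => hk ▸ hq⟩⟩
    by_contra hne
    rcases lt_trichotomy k j with h | h | h
    · exact hlt k (Nat.zero_le _) h hk
    · exact hne h
    · exact hno k h hk
  · rintro ⟨j, hj⟩
    refine ⟨j, Nat.zero_le _, ?_, fun k _ hk hPk => ?_⟩
    · rw [sat_hand, hnx]
      exact ⟨(hj j).2 rfl, fun k hk1 hk2 => by have := (hj k).1 hk2; omega⟩
    · have := (hj k).1 hPk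
      omega

lemma sat_sing' {q : ℕ} :
    sat T V P 0 (sing q) ↔ ∃ j, ∀ k, P q k ↔ k = j := sat_sing

lemma sat_sameTr [Fintype AP] {i' j' : ℕ} :
    sat T V P 0 (sameTr (AP := AP) i' j') ↔ V i' = V j' := by
  rw [sameTr, sat_hG]
  constructor
  · intro h
    funext k
    ext a
    have := (sat_conjL.1 (h k (Nat.zero_le _))) (hiff (.atom a i') (.atom a j'))
      (by simp)
    rw [sat_hiff] at this
    simpa [sat] using this
  · intro h k _
    rw [sat_conjL]
    intro b hb
    simp only [List.mem_map] at hb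
    obtain ⟨a, -, rfl⟩ := hb
    rw [sat_hiff]
    simp [sat, h]

end SatLemmas

/-! sing and sat at a shifted P: need to unfold sing; above lemmas read P q.
  (sat_sing characterizes P q itself, so works with updated P.) -/

/-! Free and bound variables -/

/-! All variables (free and bound) -/

def varsT : HQPTL AP → Finset ℕ
  | .atom _ π => {π}
  | .prop _ => ∅
  | .not φ => varsT φ
  | .or φ ψ => varsT φ ∪ varsT ψ
  | .next φ => varsT φ
  | .untl φ ψ => varsT φ ∪ varsT ψ
  | .exTr π φ => insert π (varsT φ)
  | .allTr π φ => insert π (varsT φ)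
  | .exPr _ φ => varsT φ
  | .allPr _ φ => varsT φ

def varsP : HQPTL AP → Finset ℕ
  | .atom _ _ => ∅
  | .prop q => {q}
  | .not φ => varsP φ
  | .or φ ψ => varsP φ ∪ varsP ψ
  | .next φ => varsP φ
  | .untl φ ψ => varsP φ ∪ varsP ψ
  | .exTr _ φ => varsP φ
  | .allTr _ φ => varsP φ
  | .exPr q φ => insert q (varsP φ)
  | .allPr q φ => insert q (varsP φ)

def bndT : HQPTL AP → Finset ℕ
  | .atom _ _ => ∅
  | .prop _ => ∅
  | .not φ => bndT φ
  | .or φ ψ => bndT φ ∪ bndT ψ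
  | .next φ => bndT φ
  | .untl φ ψ => bndT φ ∪ bndT ψ
  | .exTr π φ => insert π (bndT φ)
  | .allTr π φ => insert π (bndT φ)
  | .exPr _ φ => bndT φ
  | .allPr _ φ => bndT φ

def bndP : HQPTL AP → Finset ℕ
  | .atom _ _ => ∅
  | .prop _ => ∅
  | .not φ => bndP φ
  | .or φ ψ => bndP φ ∪ bndP ψ
  | .next φ => bndP φ
  | .untl φ ψ => bndP φ ∪ bndP ψ
  | .exTr _ φ => bndP φ
  | .allTr _ φ => bndP φ
  | .exPr q φ => insert q (bndP φ)
  | .allPr q φ => insert q (bndP φ)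

lemma bndT_subset_varsT : ∀ φ : HQPTL AP, bndT φ ⊆ varsT φ := by
  intro φ
  induction φ <;> intro k hk <;>
    simp only [bndT, varsT, Finset.mem_union, Finset.mem_insert,
      Finset.notMem_empty] at hk ⊢ <;> tauto

lemma bndP_subset_varsP : ∀ φ : HQPTL AP, bndP φ ⊆ varsP φ := by
  intro φ
  induction φ <;> intro k hk <;>
    simp only [bndP, varsP, Finset.mem_union, Finset.mem_insert,
      Finset.notMem_empty] at hk ⊢ <;> tauto

/-- satisfaction only depends on the values of the occurring variables -/
lemma sat_congr {T : Set (Trace AP)} :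
    ∀ (φ : HQPTL AP) (V V' : ℕ → Trace AP) (P P' : ℕ → ℕ → Prop) (i : ℕ),
    (∀ π ∈ varsT φ, V π = V' π) → (∀ q ∈ varsP φ, P q = P' q) →
    (sat T V P i φ ↔ sat T V' P' i φ) := by
  intro φ
  induction φ with
  | atom a π => intro V V' P P' i hV hP; simp [sat, hV π (by simp [varsT])]
  | prop q => intro V V' P P' i hV hP; simp [sat, hP q (by simp [varsP])]
  | not φ ih =>
    intro V V' P P' i hV hP
    simp only [sat]
    rw [ih V V' P P' i hV hP]
  | or φ ψ ih1 ih2 =>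
    intro V V' P P' i hV hP
    simp only [sat]
    rw [ih1 V V' P P' i (fun π h => hV π (by simp [varsT, h]))
        (fun q h => hP q (by simp [varsP, h])),
      ih2 V V' P P' i (fun π h => hV π (by simp [varsT, h]))
        (fun q h => hP q (by simp [varsP, h]))]
  | next φ ih =>
    intro V V' P P' i hV hP
    simp only [sat]
    rw [ih V V' P P' _ hV hP]
  | untl φ ψ ih1 ih2 =>
    intro V V' P P' i hV hP
    simp only [sat]
    constructor <;> rintro ⟨j, hj, h2, h1⟩ <;> refine ⟨j, hj, ?_, fun k hk1 hk2 => ?_⟩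
    · exact (ih2 V V' P P' _ (fun π h => hV π (by simp [varsT, h]))
        (fun q h => hP q (by simp [varsP, h]))).1 h2
    · exact (ih1 V V' P P' _ (fun π h => hV π (by simp [varsT, h]))
        (fun q h => hP q (by simp [varsP, h]))).1 (h1 k hk1 hk2)
    · exact (ih2 V V' P P' _ (fun π h => hV π (by simp [varsT, h]))
        (fun q h => hP q (by simp [varsP, h]))).2 h2
    · exact (ih1 V V' P P' _ (fun π h => hV π (by simp [varsT, h]))
        (fun q h => hP q (by simp [varsP, h]))).2 (h1 k hk1 hk2)
  | exTr π φ ih =>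
    intro V V' P P' i hV hP
    simp only [sat]
    refine exists_congr fun t => and_congr_right fun _ => ?_
    refine ih _ _ _ _ _ (fun π' h => ?_) (fun q h => hP q (by simp [varsP, h]))
    by_cases hpp : π' = π
    · subst hpp; simp
    · simp only [Function.update_of_ne hpp]
      exact hV π' (by simp [varsT, h])
  | allTr π φ ih =>
    intro V V' P P' i hV hP
    simp only [sat]
    refine forall_congr' fun t => imp_congr_right fun _ => ?_
    refine ih _ _ _ _ _ (fun π' h => ?_) (fun q h => hP q (by simp [varsP, h]))
    by_cases hpp : π' = π
    · subst hpp; simp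
    · simp only [Function.update_of_ne hpp]
      exact hV π' (by simp [varsT, h])
  | exPr q φ ih =>
    intro V V' P P' i hV hP
    simp only [sat]
    refine exists_congr fun p => ?_
    refine ih _ _ _ _ _ (fun π h => hV π (by simp [varsT, h])) (fun q' h => ?_)
    by_cases hqq : q' = q
    · subst hqq; simp
    · simp only [Function.update_of_ne hqq]
      exact hP q' (by simp [varsP, h])
  | allPr q φ ih =>
    intro V V' P P' i hV hP
    simp only [sat]
    refine forall_congr' fun p => ?_
    refine ih _ _ _ _ _ (fun π h => hV π (by simp [varsT, h])) (fun q' h => ?_)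
    by_cases hqq : q' = q
    · subst hqq; simp
    · simp only [Function.update_of_ne hqq]
      exact hP q' (by simp [varsP, h])

lemma sat_updateV {T : Set (Trace AP)} {φ : HQPTL AP} {V : ℕ → Trace AP}
    {P : ℕ → ℕ → Prop} {i π : ℕ} {t : Trace AP} (h : π ∉ varsT φ) :
    sat T (Function.update V π t) P i φ ↔ sat T V P i φ := by
  refine sat_congr φ _ _ _ _ _ (fun π' h' => ?_) (fun q _ => rfl)
  have : π' ≠ π := fun he => h (he ▸ h')
  exact Function.update_of_ne this _ _

lemma sat_updateP {T : Set (Trace AP)} {φ : HQPTL AP} {V : ℕ → Trace AP}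
    {P : ℕ → ℕ → Prop} {i q : ℕ} {p : ℕ → Prop} (h : q ∉ varsP φ) :
    sat T V (Function.update P q p) i φ ↔ sat T V P i φ := by
  refine sat_congr φ _ _ _ _ _ (fun π _ => rfl) (fun q' h' => ?_)
  have : q' ≠ q := fun he => h (he ▸ h')
  exact Function.update_of_ne this _ _
/-! Prenex-preserving negation -/

def hneg : HQPTL AP → HQPTL AP
  | .exTr π φ => .allTr π (hneg φ)
  | .allTr π φ => .exTr π (hneg φ)
  | .exPr q φ => .allPr q (hneg φ)
  | .allPr q φ => .exPr q (hneg φ)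
  | φ => .not φ

lemma sat_hneg {T : Set (Trace AP)} :
    ∀ (φ : HQPTL AP) (V : ℕ → Trace AP) (P : ℕ → ℕ → Prop) (i : ℕ),
    sat T V P i (hneg φ) ↔ ¬ sat T V P i φ := by
  intro φ
  induction φ with
  | exTr π φ ih =>
    intro V P i
    simp only [hneg, sat]
    push_neg
    exact forall_congr' fun t => imp_congr_right fun _ => ih _ _ _
  | allTr π φ ih =>
    intro V P i
    simp only [hneg, sat]
    push_neg
    exact exists_congr fun t => and_congr_right fun _ => ih _ _ _
  | exPr q φ ih =>
    intro V P i
    simp only [hneg, sat]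
    push_neg
    exact forall_congr' fun p => ih _ _ _
  | allPr q φ ih =>
    intro V P i
    simp only [hneg, sat]
    push_neg
    exact exists_congr fun p => ih _ _ _
  | atom a π => intro V P i; exact Iff.rfl
  | prop q => intro V P i; exact Iff.rfl
  | not φ ih => intro V P i; exact Iff.rfl
  | or φ ψ ih1 ih2 => intro V P i; exact Iff.rfl
  | next φ ih => intro V P i; exact Iff.rfl
  | untl φ ψ ih1 ih2 => intro V P i; exact Iff.rfl

lemma varsT_hneg : ∀ φ : HQPTL AP, varsT (hneg φ) = varsT φ := by
  intro φ; induction φ <;> simp_all [hneg, varsT]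
lemma varsP_hneg : ∀ φ : HQPTL AP, varsP (hneg φ) = varsP φ := by
  intro φ; induction φ <;> simp_all [hneg, varsP]
lemma bndT_hneg : ∀ φ : HQPTL AP, bndT (hneg φ) = bndT φ := by
  intro φ; induction φ <;> simp_all [hneg, bndT]
lemma bndP_hneg : ∀ φ : HQPTL AP, bndP (hneg φ) = bndP φ := by
  intro φ; induction φ <;> simp_all [hneg, bndP]

lemma qfree_prenex : ∀ φ : HQPTL AP, qfree φ → prenex φ := by
  intro φ h
  cases φ <;> simp_all [qfree, prenex]

lemma prenex_hneg : ∀ φ : HQPTL AP, prenex φ → prenex (hneg φ) := by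
  intro φ
  induction φ <;> simp_all [hneg, prenex, qfree]

/-! Prenex-preserving disjunction -/

def orP' (a : HQPTL AP) : HQPTL AP → HQPTL AP
  | .exTr π b => .exTr π (orP' a b)
  | .allTr π b => .allTr π (orP' a b)
  | .exPr q b => .exPr q (orP' a b)
  | .allPr q b => .allPr q (orP' a b)
  | b => .or a b

def orP : HQPTL AP → HQPTL AP → HQPTL AP
  | .exTr π a, b => .exTr π (orP a b)
  | .allTr π a, b => .allTr π (orP a b)
  | .exPr q a, b => .exPr q (orP a b)
  | .allPr q a, b => .allPr q (orP a b)
  | a, b => orP' a b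

def andIn (χ : HQPTL AP) : HQPTL AP → HQPTL AP
  | .exTr π b => .exTr π (andIn χ b)
  | .allTr π b => .allTr π (andIn χ b)
  | .exPr q b => .exPr q (andIn χ b)
  | .allPr q b => .allPr q (andIn χ b)
  | b => hand χ b

lemma varsT_orP' (a : HQPTL AP) : ∀ b, varsT (orP' a b) = varsT a ∪ varsT b := by
  intro b
  induction b <;> simp_all [orP', varsT, Finset.union_insert]

lemma varsP_orP' (a : HQPTL AP) : ∀ b, varsP (orP' a b) = varsP a ∪ varsP b := by
  intro b
  induction b <;> simp_all [orP', varsP, Finset.union_insert]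

lemma bndT_orP' (a : HQPTL AP) : ∀ b, bndT (orP' a b) = bndT a ∪ bndT b := by
  intro b
  induction b <;> simp_all [orP', bndT, Finset.union_insert]

lemma bndP_orP' (a : HQPTL AP) : ∀ b, bndP (orP' a b) = bndP a ∪ bndP b := by
  intro b
  induction b <;> simp_all [orP', bndP, Finset.union_insert]

lemma varsT_orP : ∀ a b : HQPTL AP, varsT (orP a b) = varsT a ∪ varsT b := by
  intro a
  induction a <;> intro b <;>
    simp_all [orP, varsT, varsT_orP', Finset.insert_union, Finset.union_assoc]

lemma varsP_orP : ∀ a b : HQPTL AP, varsP (orP a b) = varsP a ∪ varsP b := by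
  intro a
  induction a <;> intro b <;>
    simp_all [orP, varsP, varsP_orP', Finset.insert_union, Finset.union_assoc]

lemma bndT_orP : ∀ a b : HQPTL AP, bndT (orP a b) = bndT a ∪ bndT b := by
  intro a
  induction a <;> intro b <;>
    simp_all [orP, bndT, bndT_orP', Finset.insert_union, Finset.union_assoc]

lemma bndP_orP : ∀ a b : HQPTL AP, bndP (orP a b) = bndP a ∪ bndP b := by
  intro a
  induction a <;> intro b <;>
    simp_all [orP, bndP, bndP_orP', Finset.insert_union, Finset.union_assoc]

lemma varsT_andIn (a : HQPTL AP) : ∀ b, varsT (andIn a b) = varsT a ∪ varsT b := by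
  intro b
  induction b <;> simp_all [andIn, hand, varsT, Finset.union_insert]

lemma varsP_andIn (a : HQPTL AP) : ∀ b, varsP (andIn a b) = varsP a ∪ varsP b := by
  intro b
  induction b <;> simp_all [andIn, hand, varsP, Finset.union_insert]

lemma bndT_andIn (a : HQPTL AP) : ∀ b, bndT (andIn a b) = bndT a ∪ bndT b := by
  intro b
  induction b <;> simp_all [andIn, hand, bndT, Finset.union_insert]

lemma bndP_andIn (a : HQPTL AP) : ∀ b, bndP (andIn a b) = bndP a ∪ bndP b := by
  intro b
  induction b <;> simp_all [andIn, hand, bndP, Finset.union_insert]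

lemma prenex_orP' : ∀ (a b : HQPTL AP), qfree a → prenex b → prenex (orP' a b) := by
  intro a b
  induction b <;> intro ha hb <;> simp_all [orP', prenex, qfree]

lemma prenex_orP : ∀ (a b : HQPTL AP), prenex a → prenex b → prenex (orP a b) := by
  intro a
  induction a <;> intro b ha hb <;>
    simp_all [orP, prenex] <;> exact prenex_orP' _ _ (by simp_all [prenex]) hb

lemma prenex_andIn : ∀ (a b : HQPTL AP), qfree a → prenex b → prenex (andIn a b) := by
  intro a b
  induction b <;> intro ha hb <;> simp_all [andIn, hand, prenex, qfree]
section Pull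
variable {T : Set (Trace AP)}

lemma sat_orP' (hT : T.Nonempty) (a : HQPTL AP) :
    ∀ (b : HQPTL AP), (∀ π ∈ bndT b, π ∉ varsT a) → (∀ q ∈ bndP b, q ∉ varsP a) →
    ∀ (V : ℕ → Trace AP) (P : ℕ → ℕ → Prop) (i : ℕ),
    sat T V P i (orP' a b) ↔ sat T V P i a ∨ sat T V P i b := by
  intro b
  induction b with
  | exTr π b ih =>
    intro h1 h2 V P i
    have hπ : π ∉ varsT a := h1 π (by simp [bndT])
    simp only [orP', sat]
    constructor
    · rintro ⟨t, ht, hs⟩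
      rcases (ih (fun x hx => h1 x (by simp [bndT, hx])) h2 _ _ _).1 hs with h | h
      · exact Or.inl ((sat_updateV hπ).1 h)
      · exact Or.inr ⟨t, ht, h⟩
    · rintro (h | ⟨t, ht, hs⟩)
      · obtain ⟨t, ht⟩ := hT
        exact ⟨t, ht, (ih (fun x hx => h1 x (by simp [bndT, hx])) h2 _ _ _).2
          (Or.inl ((sat_updateV hπ).2 h))⟩
      · exact ⟨t, ht, (ih (fun x hx => h1 x (by simp [bndT, hx])) h2 _ _ _).2 (Or.inr hs)⟩
  | allTr π b ih =>
    intro h1 h2 V P i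
    have hπ : π ∉ varsT a := h1 π (by simp [bndT])
    simp only [orP', sat]
    constructor
    · intro h
      by_cases ha : sat T V P i a
      · exact Or.inl ha
      · refine Or.inr fun t ht => ?_
        rcases (ih (fun x hx => h1 x (by simp [bndT, hx])) h2 _ _ _).1 (h t ht) with h' | h'
        · exact absurd ((sat_updateV hπ).1 h') ha
        · exact h'
    · rintro (h | h) <;> intro t ht <;>
        refine (ih (fun x hx => h1 x (by simp [bndT, hx])) h2 _ _ _).2 ?_
      · exact Or.inl ((sat_updateV hπ).2 h)
      · exact Or.inr (h t ht)
  | exPr q b ih =>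
    intro h1 h2 V P i
    have hq : q ∉ varsP a := h2 q (by simp [bndP])
    simp only [orP', sat]
    constructor
    · rintro ⟨p, hs⟩
      rcases (ih h1 (fun x hx => h2 x (by simp [bndP, hx])) _ _ _).1 hs with h | h
      · exact Or.inl ((sat_updateP hq).1 h)
      · exact Or.inr ⟨p, h⟩
    · rintro (h | ⟨p, hs⟩)
      · exact ⟨fun _ => False, (ih h1 (fun x hx => h2 x (by simp [bndP, hx])) _ _ _).2
          (Or.inl ((sat_updateP hq).2 h))⟩
      · exact ⟨p, (ih h1 (fun x hx => h2 x (by simp [bndP, hx])) _ _ _).2 (Or.inr hs)⟩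
  | allPr q b ih =>
    intro h1 h2 V P i
    have hq : q ∉ varsP a := h2 q (by simp [bndP])
    simp only [orP', sat]
    constructor
    · intro h
      by_cases ha : sat T V P i a
      · exact Or.inl ha
      · refine Or.inr fun p => ?_
        rcases (ih h1 (fun x hx => h2 x (by simp [bndP, hx])) _ _ _).1 (h p) with h' | h'
        · exact absurd ((sat_updateP hq).1 h') ha
        · exact h'
    · rintro (h | h) <;> intro p <;>
        refine (ih h1 (fun x hx => h2 x (by simp [bndP, hx])) _ _ _).2 ?_
      · exact Or.inl ((sat_updateP hq).2 h)
      · exact Or.inr (h p)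
  | atom c π => intro _ _ V P i; exact Iff.rfl
  | prop q => intro _ _ V P i; exact Iff.rfl
  | not b _ => intro _ _ V P i; exact Iff.rfl
  | or b c _ _ => intro _ _ V P i; exact Iff.rfl
  | next b _ => intro _ _ V P i; exact Iff.rfl
  | untl b c _ _ => intro _ _ V P i; exact Iff.rfl

lemma sat_orP (hT : T.Nonempty) :
    ∀ (a b : HQPTL AP),
    (∀ π ∈ bndT a, π ∉ varsT b) → (∀ q ∈ bndP a, q ∉ varsP b) →
    (∀ π ∈ bndT b, π ∉ varsT a) → (∀ q ∈ bndP b, q ∉ varsP a) →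
    ∀ (V : ℕ → Trace AP) (P : ℕ → ℕ → Prop) (i : ℕ),
    sat T V P i (orP a b) ↔ sat T V P i a ∨ sat T V P i b := by
  intro a
  induction a with
  | exTr π a ih =>
    intro b h1 h1' h2 h2' V P i
    have hπ : π ∉ varsT b := h1 π (by simp [bndT])
    have ih' := ih b (fun x hx => h1 x (by simp [bndT, hx])) h1'
      (fun x hx => fun hv => h2 x hx (by simp [varsT, hv]))
      (fun x hx => h2' x hx)
    simp only [orP, sat]
    constructor
    · rintro ⟨t, ht, hs⟩
      rcases (ih' _ _ _).1 hs with h | h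
      · exact Or.inl ⟨t, ht, h⟩
      · exact Or.inr ((sat_updateV hπ).1 h)
    · rintro (⟨t, ht, hs⟩ | h)
      · exact ⟨t, ht, (ih' _ _ _).2 (Or.inl hs)⟩
      · obtain ⟨t, ht⟩ := hT
        exact ⟨t, ht, (ih' _ _ _).2 (Or.inr ((sat_updateV hπ).2 h))⟩
  | allTr π a ih =>
    intro b h1 h1' h2 h2' V P i
    have hπ : π ∉ varsT b := h1 π (by simp [bndT])
    have ih' := ih b (fun x hx => h1 x (by simp [bndT, hx])) h1'
      (fun x hx => fun hv => h2 x hx (by simp [varsT, hv]))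
      (fun x hx => h2' x hx)
    simp only [orP, sat]
    constructor
    · intro h
      by_cases hb : sat T V P i b
      · exact Or.inr hb
      · refine Or.inl fun t ht => ?_
        rcases (ih' _ _ _).1 (h t ht) with h' | h'
        · exact h'
        · exact absurd ((sat_updateV hπ).1 h') hb
    · rintro (h | h) <;> intro t ht <;> refine (ih' _ _ _).2 ?_
      · exact Or.inl (h t ht)
      · exact Or.inr ((sat_updateV hπ).2 h)
  | exPr q a ih =>
    intro b h1 h1' h2 h2' V P i
    have hq : q ∉ varsP b := h1' q (by simp [bndP])
    have ih' := ih b h1 (fun x hx => h1' x (by simp [bndP, hx]))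
      (fun x hx => h2 x hx)
      (fun x hx => fun hv => h2' x hx (by simp [varsP, hv]))
    simp only [orP, sat]
    constructor
    · rintro ⟨p, hs⟩
      rcases (ih' _ _ _).1 hs with h | h
      · exact Or.inl ⟨p, h⟩
      · exact Or.inr ((sat_updateP hq).1 h)
    · rintro (⟨p, hs⟩ | h)
      · exact ⟨p, (ih' _ _ _).2 (Or.inl hs)⟩
      · exact ⟨fun _ => False, (ih' _ _ _).2 (Or.inr ((sat_updateP hq).2 h))⟩
  | allPr q a ih =>
    intro b h1 h1' h2 h2' V P i
    have hq : q ∉ varsP b := h1' q (by simp [bndP])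
    have ih' := ih b h1 (fun x hx => h1' x (by simp [bndP, hx]))
      (fun x hx => h2 x hx)
      (fun x hx => fun hv => h2' x hx (by simp [varsP, hv]))
    simp only [orP, sat]
    constructor
    · intro h
      by_cases hb : sat T V P i b
      · exact Or.inr hb
      · refine Or.inl fun p => ?_
        rcases (ih' _ _ _).1 (h p) with h' | h'
        · exact h'
        · exact absurd ((sat_updateP hq).1 h') hb
    · rintro (h | h) <;> intro p <;> refine (ih' _ _ _).2 ?_
      · exact Or.inl (h p)
      · exact Or.inr ((sat_updateP hq).2 h)
  | atom c π => intro b _ _ h2 h2' V P i; exact sat_orP' hT _ _ h2 h2' V P i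
  | prop q => intro b _ _ h2 h2' V P i; exact sat_orP' hT _ _ h2 h2' V P i
  | not a _ => intro b _ _ h2 h2' V P i; exact sat_orP' hT _ _ h2 h2' V P i
  | or a c _ _ => intro b _ _ h2 h2' V P i; exact sat_orP' hT _ _ h2 h2' V P i
  | next a _ => intro b _ _ h2 h2' V P i; exact sat_orP' hT _ _ h2 h2' V P i
  | untl a c _ _ => intro b _ _ h2 h2' V P i; exact sat_orP' hT _ _ h2 h2' V P i

lemma sat_andIn (hT : T.Nonempty) (a : HQPTL AP) :
    ∀ (b : HQPTL AP), (∀ π ∈ bndT b, π ∉ varsT a) → (∀ q ∈ bndP b, q ∉ varsP a) →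
    ∀ (V : ℕ → Trace AP) (P : ℕ → ℕ → Prop) (i : ℕ),
    sat T V P i (andIn a b) ↔ sat T V P i a ∧ sat T V P i b := by
  intro b
  induction b with
  | exTr π b ih =>
    intro h1 h2 V P i
    have hπ : π ∉ varsT a := h1 π (by simp [bndT])
    simp only [andIn, sat]
    constructor
    · rintro ⟨t, ht, hs⟩
      obtain ⟨ha, hb⟩ := (ih (fun x hx => h1 x (by simp [bndT, hx])) h2 _ _ _).1 hs
      exact ⟨(sat_updateV hπ).1 ha, t, ht, hb⟩
    · rintro ⟨ha, t, ht, hs⟩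
      exact ⟨t, ht, (ih (fun x hx => h1 x (by simp [bndT, hx])) h2 _ _ _).2
        ⟨(sat_updateV hπ).2 ha, hs⟩⟩
  | allTr π b ih =>
    intro h1 h2 V P i
    have hπ : π ∉ varsT a := h1 π (by simp [bndT])
    simp only [andIn, sat]
    constructor
    · intro h
      obtain ⟨t0, ht0⟩ := hT
      refine ⟨(sat_updateV hπ).1
        ((ih (fun x hx => h1 x (by simp [bndT, hx])) h2 _ _ _).1 (h t0 ht0)).1,
        fun t ht => ((ih (fun x hx => h1 x (by simp [bndT, hx])) h2 _ _ _).1 (h t ht)).2⟩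
    · rintro ⟨ha, h⟩ t ht
      exact (ih (fun x hx => h1 x (by simp [bndT, hx])) h2 _ _ _).2
        ⟨(sat_updateV hπ).2 ha, h t ht⟩
  | exPr q b ih =>
    intro h1 h2 V P i
    have hq : q ∉ varsP a := h2 q (by simp [bndP])
    simp only [andIn, sat]
    constructor
    · rintro ⟨p, hs⟩
      obtain ⟨ha, hb⟩ := (ih h1 (fun x hx => h2 x (by simp [bndP, hx])) _ _ _).1 hs
      exact ⟨(sat_updateP hq).1 ha, p, hb⟩
    · rintro ⟨ha, p, hs⟩
      exact ⟨p, (ih h1 (fun x hx => h2 x (by simp [bndP, hx])) _ _ _).2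
        ⟨(sat_updateP hq).2 ha, hs⟩⟩
  | allPr q b ih =>
    intro h1 h2 V P i
    have hq : q ∉ varsP a := h2 q (by simp [bndP])
    simp only [andIn, sat]
    constructor
    · intro h
      refine ⟨(sat_updateP hq).1
        ((ih h1 (fun x hx => h2 x (by simp [bndP, hx])) _ _ _).1 (h (fun _ => False))).1,
        fun p => ((ih h1 (fun x hx => h2 x (by simp [bndP, hx])) _ _ _).1 (h p)).2⟩
    · rintro ⟨ha, h⟩ p
      exact (ih h1 (fun x hx => h2 x (by simp [bndP, hx])) _ _ _).2
        ⟨(sat_updateP hq).2 ha, h p⟩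
  | atom c π => intro _ _ V P i; exact sat_hand
  | prop q => intro _ _ V P i; exact sat_hand
  | not b _ => intro _ _ V P i; exact sat_hand
  | or b c _ _ => intro _ _ V P i; exact sat_hand
  | next b _ => intro _ _ V P i; exact sat_hand
  | untl b c _ _ => intro _ _ V P i; exact sat_hand

end Pull
/-! Basic sat unfoldings and constructor-level simp lemmas -/

@[simp] lemma sat_next {T : Set (Trace AP)} {V P i} {a : HQPTL AP} :
    sat T V P i (.next a) ↔ sat T V P (i + 1) a := Iff.rfl
@[simp] lemma sat_prop {T : Set (Trace AP)} {V P i} {q : ℕ} :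
    sat T V P i (HQPTL.prop q : HQPTL AP) ↔ P q i := Iff.rfl
@[simp] lemma sat_atom {T : Set (Trace AP)} {V P i} {a : AP} {π : ℕ} :
    sat T V P i (HQPTL.atom a π) ↔ a ∈ V π i := Iff.rfl

@[simp] lemma qfree_prop {q : ℕ} : qfree (HQPTL.prop q : HQPTL AP) := trivial
@[simp] lemma qfree_atom {a : AP} {π : ℕ} : qfree (HQPTL.atom a π) := trivial
@[simp] lemma qfree_not {a : HQPTL AP} : qfree (.not a) ↔ qfree a := Iff.rfl
@[simp] lemma qfree_next' {a : HQPTL AP} : qfree (.next a) ↔ qfree a := Iff.rfl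
@[simp] lemma qfree_or {a b : HQPTL AP} : qfree (.or a b) ↔ qfree a ∧ qfree b := Iff.rfl
@[simp] lemma qfree_untl {a b : HQPTL AP} : qfree (.untl a b) ↔ qfree a ∧ qfree b := Iff.rfl

@[simp] lemma varsT_prop {q : ℕ} : varsT (HQPTL.prop q : HQPTL AP) = ∅ := rfl
@[simp] lemma varsT_atom {a : AP} {π : ℕ} : varsT (HQPTL.atom a π) = {π} := rfl
@[simp] lemma varsT_not {a : HQPTL AP} : varsT (.not a) = varsT a := rfl
@[simp] lemma varsT_next {a : HQPTL AP} : varsT (.next a) = varsT a := rfl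
@[simp] lemma varsP_prop {q : ℕ} : varsP (HQPTL.prop q : HQPTL AP) = {q} := rfl
@[simp] lemma varsP_atom {a : AP} {π : ℕ} : varsP (HQPTL.atom a π) = ∅ := rfl
@[simp] lemma varsP_not {a : HQPTL AP} : varsP (.not a) = varsP a := rfl
@[simp] lemma varsP_next {a : HQPTL AP} : varsP (.next a) = varsP a := rfl
@[simp] lemma varsT_or {a b : HQPTL AP} : varsT (.or a b) = varsT a ∪ varsT b := rfl
@[simp] lemma varsP_or {a b : HQPTL AP} : varsP (.or a b) = varsP a ∪ varsP b := rfl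
@[simp] lemma varsT_untl {a b : HQPTL AP} : varsT (.untl a b) = varsT a ∪ varsT b := rfl
@[simp] lemma varsP_untl {a b : HQPTL AP} : varsP (.untl a b) = varsP a ∪ varsP b := rfl

/-! qfree facts -/

@[simp] lemma qfree_htt : qfree (htt : HQPTL AP) := by simp [htt, qfree]
@[simp] lemma qfree_hand {a b : HQPTL AP} : qfree (hand a b) ↔ qfree a ∧ qfree b := by
  simp [hand]
@[simp] lemma qfree_hiff {a b : HQPTL AP} : qfree (hiff a b) ↔ qfree a ∧ qfree b := by
  simp [hiff, hand]
  try tauto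
@[simp] lemma qfree_hF {a : HQPTL AP} : qfree (hF a) ↔ qfree a := by
  simp [hF]
@[simp] lemma qfree_hG {a : HQPTL AP} : qfree (hG a) ↔ qfree a := by
  simp [hG, hF]
lemma qfree_conjL {l : List (HQPTL AP)} (h : ∀ a ∈ l, qfree a) : qfree (conjL l) := by
  induction l with
  | nil => simp [conjL]
  | cons a l ih =>
    rw [conjL, qfree_hand]
    exact ⟨h a (by simp), ih fun b hb => h b (by simp [hb])⟩
@[simp] lemma qfree_sing {q : ℕ} : qfree (sing q : HQPTL AP) := by
  rw [sing]; simp [hand, hF]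
@[simp] lemma qfree_sameTr [Fintype AP] {i j : ℕ} : qfree (sameTr (AP := AP) i j) := by
  rw [sameTr, qfree_hG]
  refine qfree_conjL ?_
  intro a ha
  simp only [List.mem_map] at ha
  obtain ⟨c, -, rfl⟩ := ha
  simp

lemma bnd_qfree : ∀ a : HQPTL AP, qfree a → bndT a = ∅ ∧ bndP a = ∅ := by
  intro a
  induction a <;> simp_all [qfree, bndT, bndP]

/-! vars facts for helpers -/

@[simp] lemma varsT_htt : varsT (htt : HQPTL AP) = ∅ := by simp [htt, varsT]
@[simp] lemma varsP_htt : varsP (htt : HQPTL AP) = {0} := by simp [htt, varsP]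
@[simp] lemma varsT_hand {a b : HQPTL AP} : varsT (hand a b) = varsT a ∪ varsT b := by
  simp [hand, varsT]
@[simp] lemma varsP_hand {a b : HQPTL AP} : varsP (hand a b) = varsP a ∪ varsP b := by
  simp [hand, varsP]
@[simp] lemma varsT_hF {a : HQPTL AP} : varsT (hF a) = varsT a := by
  rw [hF]; show varsT htt ∪ varsT a = varsT a; simp
@[simp] lemma varsP_hF {a : HQPTL AP} : varsP (hF a) = {0} ∪ varsP a := by
  rw [hF]; show varsP htt ∪ varsP a = {0} ∪ varsP a; simp
@[simp] lemma varsT_sing {q : ℕ} : varsT (sing q : HQPTL AP) = ∅ := by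
  have e : varsT (sing q : HQPTL AP) =
      varsT (HQPTL.not (.prop q) : HQPTL AP) ∪
        varsT (hand (.prop q) (.not (.next (hF (.prop q)))) : HQPTL AP) := rfl
  rw [e]; simp
lemma varsP_sing {q k : ℕ} (h : k ∈ varsP (sing q : HQPTL AP)) : k = 0 ∨ k = q := by
  rw [sing] at h
  have : varsP (HQPTL.untl (.not (.prop q))
      (hand (.prop q) (.not (.next (hF (.prop q))))) : HQPTL AP) =
      varsP (.not (.prop q) : HQPTL AP) ∪
        varsP (hand (.prop q) (.not (.next (hF (.prop q)))) : HQPTL AP) := rfl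
  rw [this] at h
  simp at h
  tauto
lemma varsT_conjL {l : List (HQPTL AP)} {k : ℕ} (h : k ∈ varsT (conjL l)) :
    ∃ a ∈ l, k ∈ varsT a := by
  induction l with
  | nil => rw [conjL] at h; simp at h
  | cons a l ih =>
    rw [conjL, varsT_hand, Finset.mem_union] at h
    rcases h with h | h
    · exact ⟨a, by simp, h⟩
    · obtain ⟨b, hb, hk⟩ := ih h
      exact ⟨b, by simp [hb], hk⟩
lemma varsP_conjL {l : List (HQPTL AP)} {k : ℕ} (h : k ∈ varsP (conjL l)) :
    k = 0 ∨ ∃ a ∈ l, k ∈ varsP a := by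
  induction l with
  | nil => rw [conjL] at h; simp at h; simp [h]
  | cons a l ih =>
    rw [conjL, varsP_hand, Finset.mem_union] at h
    rcases h with h | h
    · exact Or.inr ⟨a, by simp, h⟩
    · rcases ih h with h | ⟨b, hb, hk⟩
      · exact Or.inl h
      · exact Or.inr ⟨b, by simp [hb], hk⟩
lemma varsT_sameTr [Fintype AP] {i j k : ℕ} (h : k ∈ varsT (sameTr (AP := AP) i j)) :
    k = i ∨ k = j := by
  rw [sameTr, hG, varsT_not, varsT_hF, varsT_not] at h
  obtain ⟨a, ha, hk⟩ := varsT_conjL h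
  simp only [List.mem_map] at ha
  obtain ⟨c, -, rfl⟩ := ha
  rw [hiff] at hk
  simp at hk
  tauto
lemma varsP_sameTr [Fintype AP] {i j k : ℕ} (h : k ∈ varsP (sameTr (AP := AP) i j)) :
    k = 0 := by
  rw [sameTr, hG, varsP_not, varsP_hF, varsP_not] at h
  rw [Finset.mem_union] at h
  rcases h with h | h
  · simpa using h
  · rcases varsP_conjL h with h | ⟨a, ha, hk⟩
    · exact h
    · simp only [List.mem_map] at ha
      obtain ⟨c, -, rfl⟩ := ha
      rw [hiff] at hk
      simp at hk

attribute [irreducible] htt hand hiff hF hG conjL sing sameTr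

/-! The translation -/

def cnt : FOE AP → ℕ
  | .not φ => cnt φ
  | .or φ ψ => cnt φ + cnt ψ
  | .ex _ φ => cnt φ + 1
  | _ => 0

noncomputable def tr [Fintype AP] (m : ℕ → ℕ) (n : ℕ) : FOE AP → HQPTL AP
  | .patom a x => hF (hand (.prop (m x)) (.atom a (m x)))
  | .lt x y => hand (sameTr (m x) (m y))
      (hF (hand (.prop (m x)) (.next (hF (.prop (m y))))))
  | .eq x y => hand (sameTr (m x) (m y)) (hF (hand (.prop (m x)) (.prop (m y))))
  | .el x y => hF (hand (.prop (m x)) (.prop (m y)))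
  | .not φ => hneg (tr m n φ)
  | .or φ ψ => orP (tr m n φ) (tr m (n + cnt φ) ψ)
  | .ex x φ => .exTr n (.exPr n (andIn (sing n) (tr (Function.update m x n) (n + 1) φ)))

section TrEq
variable [Fintype AP] {m : ℕ → ℕ} {n : ℕ}
lemma tr_patom {a : AP} {x : ℕ} :
    tr m n (FOE.patom a x) = hF (hand (.prop (m x)) (.atom a (m x))) := rfl
lemma tr_lt {x y : ℕ} : tr m n (FOE.lt x y : FOE AP) = hand (sameTr (m x) (m y))
    (hF (hand (.prop (m x)) (.next (hF (.prop (m y)))))) := rfl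
lemma tr_eq {x y : ℕ} : tr m n (FOE.eq x y : FOE AP) =
    hand (sameTr (m x) (m y)) (hF (hand (.prop (m x)) (.prop (m y)))) := rfl
lemma tr_el {x y : ℕ} : tr m n (FOE.el x y : FOE AP) =
    hF (hand (.prop (m x)) (.prop (m y))) := rfl
lemma tr_not {φ : FOE AP} : tr m n (FOE.not φ) = hneg (tr m n φ) := rfl
lemma tr_or {φ ψ : FOE AP} :
    tr m n (FOE.or φ ψ) = orP (tr m n φ) (tr m (n + cnt φ) ψ) := rfl
lemma tr_ex {x : ℕ} {φ : FOE AP} : tr m n (FOE.ex x φ) =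
    .exTr n (.exPr n (andIn (sing n) (tr (Function.update m x n) (n + 1) φ))) := rfl
end TrEq

attribute [irreducible] tr

lemma qfree_tr_atoms [Fintype AP] {m : ℕ → ℕ} {n : ℕ} :
    (∀ (a : AP) x, qfree (tr m n (FOE.patom a x))) ∧
    (∀ x y, qfree (tr m n (FOE.lt x y : FOE AP))) ∧
    (∀ x y, qfree (tr m n (FOE.eq x y : FOE AP))) ∧
    (∀ x y, qfree (tr m n (FOE.el x y : FOE AP))) := by
  refine ⟨fun a x => ?_, fun x y => ?_, fun x y => ?_, fun x y => ?_⟩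
  · rw [tr_patom]; simp
  · rw [tr_lt]; simp
  · rw [tr_eq]; simp
  · rw [tr_el]; simp

lemma prenex_tr [Fintype AP] : ∀ (φ : FOE AP) (m : ℕ → ℕ) (n : ℕ), prenex (tr m n φ) := by
  intro φ
  induction φ with
  | patom a x => intro m n; exact qfree_prenex _ (qfree_tr_atoms.1 a x)
  | lt x y => intro m n; exact qfree_prenex _ (qfree_tr_atoms.2.1 x y)
  | eq x y => intro m n; exact qfree_prenex _ (qfree_tr_atoms.2.2.1 x y)
  | el x y => intro m n; exact qfree_prenex _ (qfree_tr_atoms.2.2.2 x y)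
  | not φ ih => intro m n; rw [tr_not]; exact prenex_hneg _ (ih m n)
  | or φ ψ ih1 ih2 => intro m n; rw [tr_or]
                      exact prenex_orP _ _ (ih1 m n) (ih2 m (n + cnt φ))
  | ex x φ ih =>
    intro m n
    rw [tr_ex]
    show prenex (.exPr n (andIn (sing n) (tr (Function.update m x n) (n + 1) φ)))
    show prenex (andIn (sing n) (tr (Function.update m x n) (n + 1) φ))
    exact prenex_andIn _ _ qfree_sing (ih _ _)

lemma bnd_tr [Fintype AP] : ∀ (φ : FOE AP) (m : ℕ → ℕ) (n k : ℕ),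
    k ∈ bndT (tr m n φ) ∪ bndP (tr m n φ) → n ≤ k ∧ k < n + cnt φ := by
  intro φ
  induction φ with
  | patom a x => intro m n k hk
                 rw [(bnd_qfree _ (qfree_tr_atoms.1 a x)).1,
                   (bnd_qfree _ (qfree_tr_atoms.1 a x)).2] at hk
                 simp at hk
  | lt x y => intro m n k hk
              rw [(bnd_qfree _ (qfree_tr_atoms.2.1 x y)).1,
                (bnd_qfree _ (qfree_tr_atoms.2.1 x y)).2] at hk
              simp at hk
  | eq x y => intro m n k hk
              rw [(bnd_qfree _ (qfree_tr_atoms.2.2.1 x y)).1,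
                (bnd_qfree _ (qfree_tr_atoms.2.2.1 x y)).2] at hk
              simp at hk
  | el x y => intro m n k hk
              rw [(bnd_qfree _ (qfree_tr_atoms.2.2.2 x y)).1,
                (bnd_qfree _ (qfree_tr_atoms.2.2.2 x y)).2] at hk
              simp at hk
  | not φ ih => intro m n k hk
                rw [tr_not, bndT_hneg, bndP_hneg] at hk
                exact ih m n k hk
  | or φ ψ ih1 ih2 =>
    intro m n k hk
    rw [tr_or, bndT_orP, bndP_orP] at hk
    simp only [Finset.mem_union] at hk
    have hc : k ∈ bndT (tr m n φ) ∪ bndP (tr m n φ) ∨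
        k ∈ bndT (tr m (n + cnt φ) ψ) ∪ bndP (tr m (n + cnt φ) ψ) := by
      simp only [Finset.mem_union]; tauto
    rcases hc with h | h
    · have := ih1 m n k h; simp only [cnt]; omega
    · have := ih2 m (n + cnt φ) k h; simp only [cnt]; omega
  | ex x φ ih =>
    intro m n k hk
    rw [tr_ex] at hk
    have e1 : bndT (.exTr n (.exPr n (andIn (sing n)
        (tr (Function.update m x n) (n + 1) φ))) : HQPTL AP) =
        insert n (bndT (andIn (sing n) (tr (Function.update m x n) (n + 1) φ))) := rfl
    have e2 : bndP (.exTr n (.exPr n (andIn (sing n)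
        (tr (Function.update m x n) (n + 1) φ))) : HQPTL AP) =
        insert n (bndP (andIn (sing n) (tr (Function.update m x n) (n + 1) φ))) := rfl
    rw [e1, e2, bndT_andIn, bndP_andIn, (bnd_qfree (sing n) qfree_sing).1,
      (bnd_qfree (sing n) qfree_sing).2] at hk
    simp only [Finset.mem_union, Finset.mem_insert, Finset.empty_union] at hk
    have hc : k = n ∨ (k ∈ bndT (tr (Function.update m x n) (n + 1) φ) ∪
        bndP (tr (Function.update m x n) (n + 1) φ)) := by
      simp only [Finset.mem_union]; tauto
    rcases hc with rfl | h
    · simp only [cnt]; omega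
    · have := ih _ _ _ h; simp only [cnt]; omega

lemma vars_tr [Fintype AP] : ∀ (φ : FOE AP) (m : ℕ → ℕ) (n k : ℕ),
    k ∈ varsT (tr m n φ) ∪ varsP (tr m n φ) →
    k = 0 ∨ (∃ x ∈ φ.free, m x = k) ∨ (n ≤ k ∧ k < n + cnt φ) := by
  intro φ
  induction φ with
  | patom a x =>
    intro m n k hk
    rw [tr_patom] at hk
    simp only [varsT_hF, varsP_hF, varsT_hand, varsP_hand, varsT_prop, varsP_prop,
      varsT_atom, varsP_atom, Finset.mem_union, Finset.mem_singleton,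
      Finset.notMem_empty, Finset.union_empty, Finset.empty_union] at hk
    have hx : k = m x → ∃ x' ∈ (FOE.patom a x).free, m x' = k :=
      fun h => ⟨x, by simp [FOE.free], h.symm⟩
    have hd : k = 0 ∨ k = m x := by tauto
    rcases hd with h | h
    · exact Or.inl h
    · exact Or.inr (Or.inl (hx h))
  | lt x y =>
    intro m n k hk
    rw [tr_lt] at hk
    simp only [varsT_hF, varsP_hF, varsT_hand, varsP_hand, varsT_prop, varsP_prop,
      varsT_next, varsP_next, Finset.mem_union, Finset.mem_singleton,
      Finset.mem_insert, Finset.notMem_empty, Finset.union_empty,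
      Finset.empty_union] at hk
    have hx : k = m x → ∃ x' ∈ (FOE.lt x y : FOE AP).free, m x' = k :=
      fun h => ⟨x, by simp [FOE.free], h.symm⟩
    have hy : k = m y → ∃ x' ∈ (FOE.lt x y : FOE AP).free, m x' = k :=
      fun h => ⟨y, by simp [FOE.free], h.symm⟩
    have hs : k ∈ varsT (sameTr (AP := AP) (m x) (m y)) → k = m x ∨ k = m y :=
      varsT_sameTr
    have hs' : k ∈ varsP (sameTr (AP := AP) (m x) (m y)) → k = 0 := varsP_sameTr
    have hd : k = 0 ∨ k = m x ∨ k = m y ∨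
        k ∈ varsT (sameTr (AP := AP) (m x) (m y)) ∨
        k ∈ varsP (sameTr (AP := AP) (m x) (m y)) := by tauto
    rcases hd with h | h | h | h | h
    · exact Or.inl h
    · exact Or.inr (Or.inl (hx h))
    · exact Or.inr (Or.inl (hy h))
    · rcases hs h with h' | h'
      · exact Or.inr (Or.inl (hx h'))
      · exact Or.inr (Or.inl (hy h'))
    · exact Or.inl (hs' h)
  | eq x y =>
    intro m n k hk
    rw [tr_eq] at hk
    simp only [varsT_hF, varsP_hF, varsT_hand, varsP_hand, varsT_prop, varsP_prop,
      Finset.mem_union, Finset.mem_singleton, Finset.mem_insert, Finset.notMem_empty,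
      Finset.union_empty, Finset.empty_union] at hk
    have hx : k = m x → ∃ x' ∈ (FOE.eq x y : FOE AP).free, m x' = k :=
      fun h => ⟨x, by simp [FOE.free], h.symm⟩
    have hy : k = m y → ∃ x' ∈ (FOE.eq x y : FOE AP).free, m x' = k :=
      fun h => ⟨y, by simp [FOE.free], h.symm⟩
    have hs : k ∈ varsT (sameTr (AP := AP) (m x) (m y)) → k = m x ∨ k = m y :=
      varsT_sameTr
    have hs' : k ∈ varsP (sameTr (AP := AP) (m x) (m y)) → k = 0 := varsP_sameTr
    have hd : k = 0 ∨ k = m x ∨ k = m y ∨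
        k ∈ varsT (sameTr (AP := AP) (m x) (m y)) ∨
        k ∈ varsP (sameTr (AP := AP) (m x) (m y)) := by tauto
    rcases hd with h | h | h | h | h
    · exact Or.inl h
    · exact Or.inr (Or.inl (hx h))
    · exact Or.inr (Or.inl (hy h))
    · rcases hs h with h' | h'
      · exact Or.inr (Or.inl (hx h'))
      · exact Or.inr (Or.inl (hy h'))
    · exact Or.inl (hs' h)
  | el x y =>
    intro m n k hk
    rw [tr_el] at hk
    simp only [varsT_hF, varsP_hF, varsT_hand, varsP_hand, varsT_prop, varsP_prop,
      Finset.mem_union, Finset.mem_singleton, Finset.mem_insert, Finset.notMem_empty,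
      Finset.union_empty, Finset.empty_union] at hk
    have hx : k = m x → ∃ x' ∈ (FOE.el x y : FOE AP).free, m x' = k :=
      fun h => ⟨x, by simp [FOE.free], h.symm⟩
    have hy : k = m y → ∃ x' ∈ (FOE.el x y : FOE AP).free, m x' = k :=
      fun h => ⟨y, by simp [FOE.free], h.symm⟩
    have hd : k = 0 ∨ k = m x ∨ k = m y := by tauto
    rcases hd with h | h | h
    · exact Or.inl h
    · exact Or.inr (Or.inl (hx h))
    · exact Or.inr (Or.inl (hy h))
  | not φ ih =>
    intro m n k hk
    rw [tr_not, varsT_hneg, varsP_hneg] at hk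
    rcases ih m n k hk with h | (⟨x, hx, hm⟩ | h)
    · exact Or.inl h
    · exact Or.inr (Or.inl ⟨x, by simpa [FOE.free] using hx, hm⟩)
    · exact Or.inr (Or.inr (by simpa [cnt] using h))
  | or φ ψ ih1 ih2 =>
    intro m n k hk
    rw [tr_or, varsT_orP, varsP_orP] at hk
    simp only [Finset.mem_union] at hk
    have hc : k ∈ varsT (tr m n φ) ∪ varsP (tr m n φ) ∨
        k ∈ varsT (tr m (n + cnt φ) ψ) ∪ varsP (tr m (n + cnt φ) ψ) := by
      simp only [Finset.mem_union]; tauto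
    rcases hc with h | h
    · rcases ih1 m n k h with h' | (⟨x, hx, hm⟩ | h')
      · exact Or.inl h'
      · exact Or.inr (Or.inl ⟨x, by simp [FOE.free, hx], hm⟩)
      · exact Or.inr (Or.inr (by simp only [cnt]; omega))
    · rcases ih2 m (n + cnt φ) k h with h' | (⟨x, hx, hm⟩ | h')
      · exact Or.inl h'
      · exact Or.inr (Or.inl ⟨x, by simp [FOE.free, hx], hm⟩)
      · exact Or.inr (Or.inr (by simp only [cnt]; omega))
  | ex x φ ih =>
    intro m n k hk
    rw [tr_ex] at hk
    have e1 : varsT (.exTr n (.exPr n (andIn (sing n)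
        (tr (Function.update m x n) (n + 1) φ))) : HQPTL AP) =
        insert n (varsT (andIn (sing n) (tr (Function.update m x n) (n + 1) φ))) := rfl
    have e2 : varsP (.exTr n (.exPr n (andIn (sing n)
        (tr (Function.update m x n) (n + 1) φ))) : HQPTL AP) =
        insert n (varsP (andIn (sing n) (tr (Function.update m x n) (n + 1) φ))) := rfl
    rw [e1, e2, varsT_andIn, varsP_andIn, varsT_sing] at hk
    simp only [Finset.mem_union, Finset.mem_insert, Finset.empty_union] at hk
    have hc : k = n ∨ (k ∈ varsP (sing n : HQPTL AP)) ∨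
        (k ∈ varsT (tr (Function.update m x n) (n + 1) φ) ∪
          varsP (tr (Function.update m x n) (n + 1) φ)) := by
      simp only [Finset.mem_union]; tauto
    rcases hc with rfl | (h | h)
    · exact Or.inr (Or.inr (by simp only [cnt]; omega))
    · rcases varsP_sing h with rfl | rfl
      · exact Or.inl rfl
      · exact Or.inr (Or.inr (by simp only [cnt]; omega))
    · rcases ih _ _ _ h with h' | (⟨y, hy, hm⟩ | h')
      · exact Or.inl h'
      · by_cases hxy : y = x
        · subst hxy
          rw [Function.update_self] at hm
          exact Or.inr (Or.inr (by simp only [cnt]; omega))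
        · rw [Function.update_of_ne hxy] at hm
          exact Or.inr (Or.inl ⟨y, by simp [FOE.free, Finset.mem_erase, hxy, hy], hm⟩)
      · exact Or.inr (Or.inr (by simp only [cnt]; omega))
/-! The main correctness lemma -/

lemma main [Fintype AP] {T : Set (Trace AP)} (hT : T.Nonempty) :
    ∀ (φ : FOE AP) (m : ℕ → ℕ) (n : ℕ), 1 ≤ n →
    (∀ x ∈ φ.free, m x < n) →
    ∀ (V : ℕ → Trace AP) (P : ℕ → ℕ → Prop) (v : ℕ → Trace AP × ℕ),
    (∀ x ∈ φ.free, V (m x) = (v x).1 ∧ (v x).1 ∈ T ∧ (∀ j, P (m x) j ↔ j = (v x).2)) →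
    (sat T V P 0 (tr m n φ) ↔ FOE.sat T v φ) := by
  intro φ
  induction φ with
  | patom a x =>
    intro m n hn hm V P v hc
    obtain ⟨hV, -, hP⟩ := hc x (by simp [FOE.free])
    rw [tr_patom, sat_hF]
    show _ ↔ a ∈ (v x).1 (v x).2
    constructor
    · rintro ⟨j, -, hj⟩
      rw [sat_hand, sat_prop, sat_atom] at hj
      obtain ⟨h1, h2⟩ := hj
      have := (hP j).1 h1
      subst this
      rwa [hV] at h2
    · intro h
      exact ⟨(v x).2, Nat.zero_le _,
        sat_hand.2 ⟨(hP _).2 rfl, by rw [sat_atom, hV]; exact h⟩⟩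
  | lt x y =>
    intro m n hn hm V P v hc
    obtain ⟨hVx, -, hPx⟩ := hc x (by simp [FOE.free])
    obtain ⟨hVy, -, hPy⟩ := hc y (by simp [FOE.free])
    rw [tr_lt, sat_hand]
    show _ ↔ (v x).1 = (v y).1 ∧ (v x).2 < (v y).2
    refine and_congr ?_ ?_
    · rw [sat_sameTr, hVx, hVy]
    · rw [sat_hF]
      constructor
      · rintro ⟨j, -, hj⟩
        rw [sat_hand, sat_prop, sat_next, sat_hF] at hj
        obtain ⟨h1, j', hj1, hj2⟩ := hj
        rw [sat_prop] at hj2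
        have e1 := (hPx j).1 h1
        have e2 := (hPy j').1 hj2
        omega
      · intro h
        refine ⟨(v x).2, Nat.zero_le _, sat_hand.2 ⟨(hPx _).2 rfl, ?_⟩⟩
        rw [sat_next, sat_hF]
        exact ⟨(v y).2, by omega, (hPy _).2 rfl⟩
  | eq x y =>
    intro m n hn hm V P v hc
    obtain ⟨hVx, -, hPx⟩ := hc x (by simp [FOE.free])
    obtain ⟨hVy, -, hPy⟩ := hc y (by simp [FOE.free])
    rw [tr_eq, sat_hand]
    show _ ↔ v x = v y
    rw [Prod.ext_iff]
    refine and_congr ?_ ?_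
    · rw [sat_sameTr, hVx, hVy]
    · rw [sat_hF]
      constructor
      · rintro ⟨j, -, hj⟩
        rw [sat_hand, sat_prop, sat_prop] at hj
        have e1 := (hPx j).1 hj.1
        have e2 := (hPy j).1 hj.2
        omega
      · intro h
        exact ⟨(v x).2, Nat.zero_le _,
          sat_hand.2 ⟨(hPx _).2 rfl, (hPy _).2 (by omega)⟩⟩
  | el x y =>
    intro m n hn hm V P v hc
    obtain ⟨hVx, -, hPx⟩ := hc x (by simp [FOE.free])
    obtain ⟨hVy, -, hPy⟩ := hc y (by simp [FOE.free])
    rw [tr_el, sat_hF]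
    show _ ↔ (v x).2 = (v y).2
    constructor
    · rintro ⟨j, -, hj⟩
      rw [sat_hand, sat_prop, sat_prop] at hj
      have e1 := (hPx j).1 hj.1
      have e2 := (hPy j).1 hj.2
      omega
    · intro h
      exact ⟨(v x).2, Nat.zero_le _,
        sat_hand.2 ⟨(hPx _).2 rfl, (hPy _).2 (by omega)⟩⟩
  | not φ ih =>
    intro m n hn hm V P v hc
    rw [tr_not, sat_hneg]
    show _ ↔ ¬ FOE.sat T v φ
    exact not_congr (ih m n hn (fun x hx => hm x (by simpa [FOE.free] using hx)) V P v
      (fun x hx => hc x (by simpa [FOE.free] using hx)))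
  | or φ ψ ih1 ih2 =>
    intro m n hn hm V P v hc
    have key12 : ∀ k, k ∈ bndT (tr m n φ) ∪ bndP (tr m n φ) →
        k ∈ varsT (tr m (n + cnt φ) ψ) ∪ varsP (tr m (n + cnt φ) ψ) → False := by
      intro k hb hv
      have h1 := bnd_tr _ _ _ _ hb
      rcases vars_tr _ _ _ _ hv with h | (⟨z, hz, hmz⟩ | h)
      · omega
      · have := hm z (by simp [FOE.free, hz])
        omega
      · omega
    have key21 : ∀ k, k ∈ bndT (tr m (n + cnt φ) ψ) ∪ bndP (tr m (n + cnt φ) ψ) →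
        k ∈ varsT (tr m n φ) ∪ varsP (tr m n φ) → False := by
      intro k hb hv
      have h1 := bnd_tr _ _ _ _ hb
      rcases vars_tr _ _ _ _ hv with h | (⟨z, hz, hmz⟩ | h)
      · omega
      · have := hm z (by simp [FOE.free, hz])
        omega
      · omega
    rw [tr_or, sat_orP hT _ _
      (fun k hk hv => key12 k (Finset.mem_union_left _ hk) (Finset.mem_union_left _ hv))
      (fun k hk hv => key12 k (Finset.mem_union_right _ hk) (Finset.mem_union_right _ hv))
      (fun k hk hv => key21 k (Finset.mem_union_left _ hk) (Finset.mem_union_left _ hv))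
      (fun k hk hv => key21 k (Finset.mem_union_right _ hk) (Finset.mem_union_right _ hv))]
    show _ ↔ FOE.sat T v φ ∨ FOE.sat T v ψ
    exact or_congr
      (ih1 m n hn (fun x hx => hm x (by simp [FOE.free, hx])) V P v
        (fun x hx => hc x (by simp [FOE.free, hx])))
      (ih2 m (n + cnt φ) (by omega) (fun x hx => by have := hm x (by simp [FOE.free, hx]); omega)
        V P v (fun x hx => hc x (by simp [FOE.free, hx])))
  | ex x φ ih =>
    intro m n hn hm V P v hc
    have hbT : ∀ π ∈ bndT (tr (Function.update m x n) (n + 1) φ),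
        π ∉ varsT (sing n : HQPTL AP) := by
      intro π _ hv
      rw [varsT_sing] at hv
      exact absurd hv (Finset.notMem_empty _)
    have hbP : ∀ q ∈ bndP (tr (Function.update m x n) (n + 1) φ),
        q ∉ varsP (sing n : HQPTL AP) := by
      intro q hq hv
      have hb := bnd_tr φ _ _ _ (Finset.mem_union_right _ hq)
      rcases varsP_sing hv with rfl | rfl <;> omega
    have hIH : ∀ (t : Trace AP) (j : ℕ) (p : ℕ → Prop), t ∈ T →
        (∀ k, p k ↔ k = j) →
        (sat T (Function.update V n t) (Function.update P n p) 0
            (tr (Function.update m x n) (n + 1) φ) ↔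
          FOE.sat T (Function.update v x (t, j)) φ) := by
      intro t j p ht hp
      refine ih (Function.update m x n) (n + 1) (by omega) ?_ _ _ _ ?_
      · intro y hy
        by_cases hxy : y = x
        · subst hxy; rw [Function.update_self]; omega
        · rw [Function.update_of_ne hxy]
          have := hm y (by simp [FOE.free, Finset.mem_erase, hxy, hy])
          omega
      · intro y hy
        by_cases hxy : y = x
        · subst hxy
          rw [Function.update_self, Function.update_self, Function.update_self,
            Function.update_self]
          exact ⟨rfl, ht, fun k => hp k⟩
        · rw [Function.update_of_ne hxy, Function.update_of_ne hxy]
          have hlt := hm y (by simp [FOE.free, Finset.mem_erase, hxy, hy])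
          have hne : m y ≠ n := by omega
          rw [Function.update_of_ne hne, Function.update_of_ne hne]
          exact hc y (by simp [FOE.free, Finset.mem_erase, hxy, hy])
    rw [tr_ex]
    show (∃ t ∈ T, ∃ p : ℕ → Prop,
        sat T (Function.update V n t) (Function.update P n p) 0
          (andIn (sing n) (tr (Function.update m x n) (n + 1) φ))) ↔
      ∃ p : Trace AP × ℕ, p.1 ∈ T ∧ FOE.sat T (Function.update v x p) φ
    constructor
    · rintro ⟨t, ht, p, hs⟩
      rw [sat_andIn hT _ _ hbT hbP, sat_sing] at hs
      obtain ⟨⟨j, hj⟩, hB⟩ := hs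
      rw [Function.update_self] at hj
      exact ⟨(t, j), ht, (hIH t j p ht hj).1 hB⟩
    · rintro ⟨⟨t, j⟩, ht, hsat⟩
      refine ⟨t, ht, fun k => k = j, ?_⟩
      rw [sat_andIn hT _ _ hbT hbP, sat_sing]
      refine ⟨⟨j, fun k => ?_⟩, (hIH t j _ ht (fun k => Iff.rfl)).2 hsat⟩
      rw [Function.update_self]

/-! Assembly of the final theorem -/

lemma final [Fintype AP] (φ : FOE AP) (hφ : φ.closed) :
    ∃ ψ : HQPTL AP, ψ.prenex ∧
      ∀ T : Set (Trace AP), FOE.models T φ ↔ HQPTL.models T ψ := by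
  classical
  have hfree : φ.free = ∅ := hφ
  by_cases hE : FOE.models (∅ : Set (Trace AP)) φ
  · refine ⟨.allTr 0 (tr (fun _ => 0) 1 φ), ?_, ?_⟩
    · show prenex (tr (fun _ => 0) 1 φ)
      exact prenex_tr φ _ _
    · intro T
      by_cases hT : T.Nonempty
      · have hmain : ∀ (V : ℕ → Trace AP) (P : ℕ → ℕ → Prop),
            sat T V P 0 (tr (fun _ => 0) 1 φ) ↔
              FOE.sat T (fun _ => (fun _ => (∅ : Set AP), 0)) φ := by
          intro V P
          exact main hT φ _ 1 le_rfl (by rw [hfree]; simp) V P _ (by rw [hfree]; simp)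
        show FOE.sat T _ φ ↔ ∀ t ∈ T, _
        constructor
        · intro h t ht
          exact (hmain _ _).2 h
        · intro h
          obtain ⟨t, ht⟩ := hT
          exact (hmain _ _).1 (h t ht)
      · have hTe : T = ∅ := Set.not_nonempty_iff_eq_empty.1 hT
        subst hTe
        constructor
        · intro _ t ht
          exact absurd ht (Set.notMem_empty t)
        · intro _
          exact hE
  · refine ⟨.exTr 0 (tr (fun _ => 0) 1 φ), ?_, ?_⟩
    · show prenex (tr (fun _ => 0) 1 φ)
      exact prenex_tr φ _ _
    · intro T
      by_cases hT : T.Nonempty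
      · have hmain : ∀ (V : ℕ → Trace AP) (P : ℕ → ℕ → Prop),
            sat T V P 0 (tr (fun _ => 0) 1 φ) ↔
              FOE.sat T (fun _ => (fun _ => (∅ : Set AP), 0)) φ := by
          intro V P
          exact main hT φ _ 1 le_rfl (by rw [hfree]; simp) V P _ (by rw [hfree]; simp)
        show FOE.sat T _ φ ↔ ∃ t ∈ T, _
        constructor
        · intro h
          obtain ⟨t, ht⟩ := hT
          exact ⟨t, ht, (hmain _ _).2 h⟩
        · rintro ⟨t, ht, hs⟩
          exact (hmain _ _).1 hs
      · have hTe : T = ∅ := Set.not_nonempty_iff_eq_empty.1 hT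
        subst hTe
        constructor
        · intro h
          exact absurd h hE
        · rintro ⟨t, ht, -⟩
          exact absurd ht (Set.notMem_empty t)

end Sub0

/-- HyperQPTL is at least as expressive as FO[<,E]. -/
theorem hyperQPTL_subsumes_FOE (AP : Type) [Fintype AP]
    (φ : FOE AP) (hφ : φ.closed) :
    ∃ ψ : HQPTL AP, ψ.prenex ∧
      ∀ T : Set (Trace AP), FOE.models T φ ↔ HQPTL.models T ψ := by
  exact Sub0.final φ hφ
end

section
/- S1S[E] is at least as expressive as HyperQPTL: for every HyperQPTL formula φ there exists a closed S1S[E] formula ψ such that for every trace set T, T ⊨ φ if and only if T ⊨ ψ. -/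
set_option linter.unusedVariables false

/-!
An instant `n` is represented by a position `(t, n)` of S1S[E] held by a first-order clock
variable; `◯` moves the clock along its trace by the successor term, and `U` quantifies over
positions of the clock's trace between two clocks, the order on a trace being definable by
second-order induction. A trace variable `π` becomes a first-order variable placed anywhere on its
trace, and `a_π` holds at the clock's instant iff the position of that trace at the same level
(`E`) lies in `X_a`. A propositional variable becomes a set of positions whose projection to
time is the proposition; every subset of `ℕ` is such a projection once `T` is nonempty.

On the empty trace set all first-order quantifiers of S1S[E] are void, while `φ` still has a truth
value there; so the initial clock is introduced existentially or universally according to whether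
`∅ ⊨ φ`.
-/

namespace Function

@[simp] lemma update_odd_apply_even {α : Type*} (v : ℕ → α) (a b : ℕ) (x : α) :
    update v (2 * a + 1) x (2 * b) = v (2 * b) :=
  update_of_ne (by omega) _ _

@[simp] lemma update_even_apply_odd {α : Type*} (v : ℕ → α) (a b : ℕ) (x : α) :
    update v (2 * a) x (2 * b + 1) = v (2 * b + 1) :=
  update_of_ne (by omega) _ _

end Function

namespace S1SE

variable {AP : Type}

def and (φ ψ : S1SE AP) : S1SE AP := .not (.or (.not φ) (.not ψ))

def imp (φ ψ : S1SE AP) : S1SE AP := .or (.not φ) ψ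

def allFO (x : ℕ) (φ : S1SE AP) : S1SE AP := .not (.exFO x (.not φ))

def allSO (X : ℕ) (φ : S1SE AP) : S1SE AP := .not (.exSO X (.not φ))

def bot : S1SE AP := .exFO 0 (.not (.eq (.var 0) (.var 0)))

def le (τ σ : S1STerm) : S1SE AP :=
  allSO 0 (imp (and (.mem τ (.inl 0))
      (allFO 0 (imp (.mem (.var 0) (.inl 0)) (.mem (.succ (.var 0)) (.inl 0)))))
    (.mem σ (.inl 0)))

section Semantics

variable {T : Set (Trace AP)} {v1 : ℕ → Trace AP × ℕ} {v2 : ℕ → Set (Trace AP × ℕ)}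

@[simp] lemma sat_and {φ ψ : S1SE AP} :
    sat T v1 v2 (and φ ψ) ↔ sat T v1 v2 φ ∧ sat T v1 v2 ψ := by
  simp only [and, sat, not_or, not_not]

@[simp] lemma sat_imp {φ ψ : S1SE AP} :
    sat T v1 v2 (imp φ ψ) ↔ (sat T v1 v2 φ → sat T v1 v2 ψ) := by
  simp only [imp, sat, imp_iff_not_or]

@[simp] lemma sat_allFO {x : ℕ} {φ : S1SE AP} :
    sat T v1 v2 (allFO x φ) ↔
      ∀ p : Trace AP × ℕ, p.1 ∈ T → sat T (Function.update v1 x p) v2 φ := by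
  simp only [allFO, sat]; push Not; rfl

@[simp] lemma sat_allSO {X : ℕ} {φ : S1SE AP} :
    sat T v1 v2 (allSO X φ) ↔
      ∀ A : Set (Trace AP × ℕ), (∀ p ∈ A, p.1 ∈ T) → sat T v1 (Function.update v2 X A) φ := by
  simp only [allSO, sat]; push Not; rfl

@[simp] lemma not_sat_bot : ¬ sat T v1 v2 (bot : S1SE AP) := by
  simp [bot, sat]

lemma sat_le {τ σ : S1STerm} (hτ : (τ.val v1).1 ∈ T) :
    sat T v1 v2 (le τ σ) ↔ (σ.val v1).1 = (τ.val v1).1 ∧ (τ.val v1).2 ≤ (σ.val v1).2 := by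
  simp only [le, sat_allSO, sat_imp, sat_and, sat_allFO, sat, S1STerm.val, Function.update_self]
  constructor
  · intro h
    simpa using h {p | p.1 = (τ.val v1).1 ∧ (τ.val v1).2 ≤ p.2} (fun p hp => hp.1 ▸ hτ)
      ⟨⟨rfl, le_rfl⟩, fun p _ hp => ⟨hp.1, hp.2.trans (Nat.le_succ _)⟩⟩
  · rintro ⟨hσ, hle⟩ A _ ⟨hτA, hA⟩
    obtain ⟨d, hd⟩ := Nat.exists_eq_add_of_le hle
    have hreach : ∀ d, ((τ.val v1).1, (τ.val v1).2 + d) ∈ A := by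
      intro d
      induction d with
      | zero => exact hτA
      | succ d ih => exact hA (_, (τ.val v1).2 + d) hτ ih
    simpa [← hσ, ← hd] using hreach d

lemma sat_exFO_le_and {x y : ℕ} (hyx : y ≠ x) (hx : (v1 x).1 ∈ T) {φ : S1SE AP} :
    sat T v1 v2 (.exFO y (and (le (.var x) (.var y)) φ)) ↔
      ∃ j, (v1 x).2 ≤ j ∧ sat T (Function.update v1 y ((v1 x).1, j)) v2 φ := by
  have hle (p : Trace AP × ℕ) : sat T (Function.update v1 y p) v2 (le (.var x) (.var y)) ↔
      p.1 = (v1 x).1 ∧ (v1 x).2 ≤ p.2 := by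
    rw [sat_le] <;> simp [S1STerm.val, Function.update_of_ne hyx.symm, hx]
  simp only [sat, sat_and, hle]
  constructor
  · rintro ⟨⟨t, j⟩, -, ⟨rfl, hj⟩, h⟩
    exact ⟨j, hj, h⟩
  · rintro ⟨j, hj, h⟩
    exact ⟨((v1 x).1, j), hx, ⟨rfl, hj⟩, h⟩

lemma sat_allFO_le_imp {x y z : ℕ} (hzx : z ≠ x) (hzy : z ≠ y) (hx : (v1 x).1 ∈ T)
    (hyx : (v1 y).1 = (v1 x).1) {φ : S1SE AP} :
    sat T v1 v2 (allFO z (imp (and (le (.var x) (.var z)) (le (.succ (.var z)) (.var y))) φ)) ↔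
      ∀ k, (v1 x).2 ≤ k → k < (v1 y).2 → sat T (Function.update v1 z ((v1 x).1, k)) v2 φ := by
  have hle (p : Trace AP × ℕ) (hp : p.1 ∈ T) : sat T (Function.update v1 z p) v2
      (and (le (.var x) (.var z)) (le (.succ (.var z)) (.var y))) ↔
        (p.1 = (v1 x).1 ∧ (v1 x).2 ≤ p.2) ∧ (v1 y).1 = p.1 ∧ p.2 < (v1 y).2 := by
    rw [sat_and, sat_le, sat_le] <;>
      simp [S1STerm.val, Function.update_of_ne hzx.symm, Function.update_of_ne hzy.symm, hx, hp]
  simp only [sat_allFO, sat_imp]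
  constructor
  · intro h k hk hky
    exact h ((v1 x).1, k) hx ((hle ((v1 x).1, k) hx).2 ⟨⟨rfl, hk⟩, hyx, hky⟩)
  · rintro h ⟨t, k⟩ hp hk
    obtain ⟨⟨rfl, hk⟩, -, hky⟩ := (hle _ hp).1 hk
    exact h k hk hky

end Semantics

@[simp] lemma freeFO_and (φ ψ : S1SE AP) : (and φ ψ).freeFO = φ.freeFO ∪ ψ.freeFO := rfl

@[simp] lemma freeSO_and (φ ψ : S1SE AP) : (and φ ψ).freeSO = φ.freeSO ∪ ψ.freeSO := rfl

@[simp] lemma freeFO_imp (φ ψ : S1SE AP) : (imp φ ψ).freeFO = φ.freeFO ∪ ψ.freeFO := rfl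

@[simp] lemma freeSO_imp (φ ψ : S1SE AP) : (imp φ ψ).freeSO = φ.freeSO ∪ ψ.freeSO := rfl

@[simp] lemma freeFO_allFO (x : ℕ) (φ : S1SE AP) : (allFO x φ).freeFO = φ.freeFO.erase x := rfl

@[simp] lemma freeSO_allFO (x : ℕ) (φ : S1SE AP) : (allFO x φ).freeSO = φ.freeSO := rfl

@[simp] lemma freeFO_allSO (X : ℕ) (φ : S1SE AP) : (allSO X φ).freeFO = φ.freeFO := rfl

@[simp] lemma freeSO_allSO (X : ℕ) (φ : S1SE AP) : (allSO X φ).freeSO = φ.freeSO.erase X := rfl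

@[simp] lemma freeFO_bot : (bot : S1SE AP).freeFO = ∅ := by
  simp [bot, freeFO, S1STerm.fv]

@[simp] lemma freeSO_bot : (bot : S1SE AP).freeSO = ∅ := rfl

@[simp] lemma freeFO_le (τ σ : S1STerm) : (le τ σ : S1SE AP).freeFO = τ.fv ∪ σ.fv := by
  simp [le, freeFO, S1STerm.fv]

@[simp] lemma freeSO_le (τ σ : S1STerm) : (le τ σ : S1SE AP).freeSO = ∅ := by
  simp [le, freeSO]

end S1SE

namespace HQPTL

variable {AP : Type}

open S1SE (and imp allFO allSO bot le)

/-- `φ` at the time held by the first-order variable `2 * n`, with `B` and `Bq` the trace and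
propositional variables bound so far: `π` is represented by the first-order variable `2 * π + 1`,
`q` by the second-order variable `2 * q`, and the even variables above `2 * n` are fresh. -/
def toS1SE : HQPTL AP → Finset ℕ → Finset ℕ → ℕ → S1SE AP
  | atom a π, B, _, n =>
      if π ∈ B then
        .exFO (2 * (n + 1)) (and (.eq (.min (2 * (n + 1))) (.min (2 * π + 1)))
          (and (.el (.var (2 * (n + 1))) (.var (2 * n))) (.mem (.var (2 * (n + 1))) (.inr a))))
      else bot
  | prop q, _, Bq, n =>
      if q ∈ Bq then
        .exFO (2 * (n + 1)) (and (.el (.var (2 * (n + 1))) (.var (2 * n)))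
          (.mem (.var (2 * (n + 1))) (.inl (2 * q))))
      else bot
  | not φ, B, Bq, n => .not (φ.toS1SE B Bq n)
  | or φ ψ, B, Bq, n => .or (φ.toS1SE B Bq n) (ψ.toS1SE B Bq n)
  | next φ, B, Bq, n =>
      .exFO (2 * (n + 1)) (and (.eq (.var (2 * (n + 1))) (.succ (.var (2 * n))))
        (φ.toS1SE B Bq (n + 1)))
  | untl φ ψ, B, Bq, n =>
      .exFO (2 * (n + 1)) (and (le (.var (2 * n)) (.var (2 * (n + 1))))
        (and (ψ.toS1SE B Bq (n + 1))
          (allFO (2 * (n + 2)) (imp (and (le (.var (2 * n)) (.var (2 * (n + 2))))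
              (le (.succ (.var (2 * (n + 2)))) (.var (2 * (n + 1)))))
            (φ.toS1SE B Bq (n + 2))))))
  | exTr π φ, B, Bq, n => .exFO (2 * π + 1) (φ.toS1SE (insert π B) Bq n)
  | allTr π φ, B, Bq, n => allFO (2 * π + 1) (φ.toS1SE (insert π B) Bq n)
  | exPr q φ, B, Bq, n => .exSO (2 * q) (φ.toS1SE B (insert q Bq) n)
  | allPr q φ, B, Bq, n => allSO (2 * q) (φ.toS1SE B (insert q Bq) n)

lemma freeFO_toS1SE (φ : HQPTL AP) (B Bq : Finset ℕ) (n : ℕ) :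
    ∀ x ∈ (φ.toS1SE B Bq n).freeFO, x = 2 * n ∨ ∃ π ∈ B, x = 2 * π + 1 := by
  induction φ generalizing B Bq n <;>
    grind [toS1SE, S1SE.freeFO, S1STerm.fv, S1SE.freeFO_and, S1SE.freeFO_imp, S1SE.freeFO_allFO,
      S1SE.freeFO_allSO, S1SE.freeFO_le, S1SE.freeFO_bot]

lemma freeSO_toS1SE (φ : HQPTL AP) (B Bq : Finset ℕ) (n : ℕ) :
    ∀ X ∈ (φ.toS1SE B Bq n).freeSO, ∃ q ∈ Bq, X = 2 * q := by
  induction φ generalizing B Bq n <;>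
    grind [toS1SE, S1SE.freeSO, S1SE.freeSO_and, S1SE.freeSO_imp, S1SE.freeSO_allFO,
      S1SE.freeSO_allSO, S1SE.freeSO_le, S1SE.freeSO_bot]

structure EncodedBy (T : Set (Trace AP)) (B Bq : Finset ℕ) (V : ℕ → Trace AP)
    (P : ℕ → ℕ → Prop) (v1 : ℕ → Trace AP × ℕ) (v2 : ℕ → Set (Trace AP × ℕ)) : Prop where
  trace_mem : ∀ π ∈ B, V π ∈ T
  trace_eq : ∀ π ∈ B, (v1 (2 * π + 1)).1 = V π
  trace_empty : ∀ π ∉ B, ∀ i, V π i = ∅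
  prop_iff : ∀ q ∈ Bq, ∀ i, P q i ↔ ∃ p ∈ v2 (2 * q), p.1 ∈ T ∧ p.2 = i
  prop_false : ∀ q ∉ Bq, ∀ i, ¬ P q i

namespace EncodedBy

variable {T : Set (Trace AP)} {B Bq : Finset ℕ} {V : ℕ → Trace AP} {P : ℕ → ℕ → Prop}
  {v1 : ℕ → Trace AP × ℕ} {v2 : ℕ → Set (Trace AP × ℕ)}

lemma init : EncodedBy T ∅ ∅ (fun _ _ => ∅) (fun _ _ => False) v1 v2 where
  trace_mem := by simp
  trace_eq := by simp
  trace_empty := by simp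
  prop_iff := by simp
  prop_false := by simp

lemma update_even (h : EncodedBy T B Bq V P v1 v2) (m : ℕ) (p : Trace AP × ℕ) :
    EncodedBy T B Bq V P (Function.update v1 (2 * m) p) v2 where
  __ := h
  trace_eq π hπ := by simpa using h.trace_eq π hπ

lemma update_trace (h : EncodedBy T B Bq V P v1 v2) (π : ℕ) {p : Trace AP × ℕ} (hp : p.1 ∈ T) :
    EncodedBy T (insert π B) Bq (Function.update V π p.1) P
      (Function.update v1 (2 * π + 1) p) v2 where
  __ := h
  trace_mem π' hπ' := by
    rcases eq_or_ne π' π with rfl | hne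
    · simpa using hp
    · simpa [hne] using h.trace_mem π' (by simpa [hne] using hπ')
  trace_eq π' hπ' := by
    rcases eq_or_ne π' π with rfl | hne
    · simp
    · simpa [hne] using h.trace_eq π' (by simpa [hne] using hπ')
  trace_empty π' hπ' := by
    simp only [Finset.mem_insert, not_or] at hπ'
    simpa [hπ'.1] using h.trace_empty π' hπ'.2

lemma update_prop (h : EncodedBy T B Bq V P v1 v2) (q : ℕ) {s : ℕ → Prop}
    {A : Set (Trace AP × ℕ)} (hs : ∀ i, s i ↔ ∃ p ∈ A, p.1 ∈ T ∧ p.2 = i) :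
    EncodedBy T B (insert q Bq) V (Function.update P q s) v1 (Function.update v2 (2 * q) A) where
  __ := h
  prop_iff q' hq' := by
    rcases eq_or_ne q' q with rfl | hne
    · simpa using hs
    · simpa [hne] using h.prop_iff q' (by simpa [hne] using hq')
  prop_false q' hq' := by
    simp only [Finset.mem_insert, not_or] at hq'
    simpa [hq'.1] using h.prop_false q' hq'.2

end EncodedBy

lemma exists_mem_setOf_snd_iff {T : Set (Trace AP)} (hT : T.Nonempty) (s : ℕ → Prop) (i : ℕ) :
    s i ↔ ∃ p ∈ {p : Trace AP × ℕ | p.1 ∈ T ∧ s p.2}, p.1 ∈ T ∧ p.2 = i := by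
  obtain ⟨t, ht⟩ := hT
  exact ⟨fun hs => ⟨(t, i), ⟨ht, hs⟩, ht, rfl⟩, by rintro ⟨p, ⟨-, hp⟩, -, rfl⟩; exact hp⟩

theorem sat_iff_sat_toS1SE {T : Set (Trace AP)} {B Bq : Finset ℕ} {V : ℕ → Trace AP}
    {P : ℕ → ℕ → Prop} {v1 : ℕ → Trace AP × ℕ} {v2 : ℕ → Set (Trace AP × ℕ)} {n : ℕ}
    (φ : HQPTL AP) (hV : EncodedBy T B Bq V P v1 v2) (hn : (v1 (2 * n)).1 ∈ T) :
    sat T V P (v1 (2 * n)).2 φ ↔ S1SE.sat T v1 v2 (φ.toS1SE B Bq n) := by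
  induction φ generalizing B Bq V P v1 v2 n with
  | atom a π =>
    by_cases hπ : π ∈ B
    · simp [toS1SE, sat, S1SE.sat, hπ, S1STerm.val, hV.trace_eq π hπ, hV.trace_mem π hπ]
    · simp [toS1SE, sat, hπ, hV.trace_empty π hπ]
  | prop q =>
    by_cases hq : q ∈ Bq
    · simp [toS1SE, sat, S1SE.sat, hq, S1STerm.val, hV.prop_iff q hq, and_comm]
    · simp [toS1SE, sat, hq, hV.prop_false q hq]
  | not φ ih => simp only [toS1SE, sat, S1SE.sat, ih hV hn]
  | or φ ψ ih₁ ih₂ => simp only [toS1SE, sat, S1SE.sat, ih₁ hV hn, ih₂ hV hn]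
  | next φ ih =>
    simpa [toS1SE, sat, S1SE.sat, S1STerm.val, hn] using
      ih (hV.update_even (n + 1) ((v1 (2 * n)).1, (v1 (2 * n)).2 + 1)) (n := n + 1) (by simpa)
  | untl φ ψ ih₁ ih₂ =>
    have hψ (j : ℕ) := ih₂ (hV.update_even (n + 1) ((v1 (2 * n)).1, j)) (n := n + 1) (by simpa)
    have hφ (j k : ℕ) := ih₁ ((hV.update_even (n + 1) ((v1 (2 * n)).1, j)).update_even (n + 2)
      ((v1 (2 * n)).1, k)) (n := n + 2) (by simpa)
    simp only [Function.update_self] at hψ hφ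
    rw [toS1SE, S1SE.sat_exFO_le_and (by omega) hn]
    refine exists_congr fun j => and_congr_right fun _ => ?_
    rw [S1SE.sat_and, S1SE.sat_allFO_le_imp (by omega) (by omega) (by simpa) (by simp), ← hψ]
    simp [← hφ j]
  | exTr π φ ih =>
    have key (p : Trace AP × ℕ) (hp : p.1 ∈ T) :=
      ih (hV.update_trace π hp) (n := n) (by simpa using hn)
    simp only [Function.update_odd_apply_even] at key
    simp only [toS1SE, sat, S1SE.sat]
    exact ⟨fun ⟨t, ht, h⟩ => ⟨(t, 0), ht, (key _ ht).1 h⟩,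
      fun ⟨p, hp, h⟩ => ⟨p.1, hp, (key p hp).2 h⟩⟩
  | allTr π φ ih =>
    have key (p : Trace AP × ℕ) (hp : p.1 ∈ T) :=
      ih (hV.update_trace π hp) (n := n) (by simpa using hn)
    simp only [Function.update_odd_apply_even] at key
    simp only [toS1SE, sat, S1SE.sat_allFO]
    exact ⟨fun h p hp => (key p hp).1 (h _ hp), fun h t ht => (key (t, 0) ht).2 (h _ ht)⟩
  | exPr q φ ih =>
    have key {s : ℕ → Prop} {A : Set (Trace AP × ℕ)}
        (hs : ∀ i, s i ↔ ∃ p ∈ A, p.1 ∈ T ∧ p.2 = i) :=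
      ih (hV.update_prop q hs) hn
    simp only [toS1SE, sat, S1SE.sat]
    constructor
    · rintro ⟨s, h⟩
      exact ⟨_, fun p hp => hp.1, (key (exists_mem_setOf_snd_iff ⟨_, hn⟩ s)).1 h⟩
    · rintro ⟨A, -, h⟩
      exact ⟨_, (key fun _ => Iff.rfl).2 h⟩
  | allPr q φ ih =>
    have key {s : ℕ → Prop} {A : Set (Trace AP × ℕ)}
        (hs : ∀ i, s i ↔ ∃ p ∈ A, p.1 ∈ T ∧ p.2 = i) :=
      ih (hV.update_prop q hs) hn
    simp only [toS1SE, sat, S1SE.sat_allSO]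
    constructor
    · exact fun h A _ => (key fun _ => Iff.rfl).1 (h _)
    · exact fun h s => (key (exists_mem_setOf_snd_iff ⟨_, hn⟩ s)).2 (h _ fun p hp => hp.1)

def toSentenceEx (φ : HQPTL AP) : S1SE AP :=
  .exFO 0 (and (.eq (.var 0) (.min 0)) (φ.toS1SE ∅ ∅ 0))

def toSentenceAll (φ : HQPTL AP) : S1SE AP :=
  allFO 0 (imp (.eq (.var 0) (.min 0)) (φ.toS1SE ∅ ∅ 0))

lemma freeFO_toS1SE_erase_zero (φ : HQPTL AP) : (φ.toS1SE ∅ ∅ 0).freeFO.erase 0 = ∅ :=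
  Finset.eq_empty_of_forall_notMem fun x hx => by
    simpa [(Finset.mem_erase.1 hx).1] using freeFO_toS1SE φ ∅ ∅ 0 x (Finset.mem_erase.1 hx).2

lemma freeSO_toS1SE_empty (φ : HQPTL AP) : (φ.toS1SE ∅ ∅ 0).freeSO = ∅ :=
  Finset.eq_empty_of_forall_notMem fun X hX => by simpa using freeSO_toS1SE φ ∅ ∅ 0 X hX

lemma closed_toSentenceEx (φ : HQPTL AP) : φ.toSentenceEx.closed := by
  constructor <;> simp [toSentenceEx, S1SE.freeFO, S1SE.freeSO, S1STerm.fv,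
    freeFO_toS1SE_erase_zero, freeSO_toS1SE_empty]

lemma closed_toSentenceAll (φ : HQPTL AP) : φ.toSentenceAll.closed := by
  constructor <;> simp [toSentenceAll, S1SE.freeFO, S1SE.freeSO, S1STerm.fv,
    freeFO_toS1SE_erase_zero, freeSO_toS1SE_empty]

section Models

variable {T : Set (Trace AP)}

lemma sat_toS1SE_empty_iff_models (φ : HQPTL AP) {t : Trace AP} (ht : t ∈ T)
    (v1 : ℕ → Trace AP × ℕ) (v2 : ℕ → Set (Trace AP × ℕ)) :
    S1SE.sat T (Function.update v1 0 (t, 0)) v2 (φ.toS1SE ∅ ∅ 0) ↔ models T φ := by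
  have h := sat_iff_sat_toS1SE (n := 0) φ
    (EncodedBy.init (T := T) (v1 := Function.update v1 0 (t, 0)) (v2 := v2))
  simp only [mul_zero, Function.update_self] at h
  exact (h ht).symm

lemma models_toSentenceEx (φ : HQPTL AP) :
    S1SE.models T φ.toSentenceEx ↔ T.Nonempty ∧ models T φ := by
  simp only [S1SE.models, toSentenceEx, S1SE.sat, S1SE.sat_and, S1STerm.val, Function.update_self]
  constructor
  · rintro ⟨p, hp, hp₀, h⟩
    rw [hp₀] at h
    exact ⟨⟨_, hp⟩, (sat_toS1SE_empty_iff_models φ hp _ _).1 h⟩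
  · rintro ⟨⟨t, ht⟩, h⟩
    exact ⟨(t, 0), ht, rfl, (sat_toS1SE_empty_iff_models φ ht _ _).2 h⟩

lemma models_toSentenceAll (φ : HQPTL AP) :
    S1SE.models T φ.toSentenceAll ↔ (T.Nonempty → models T φ) := by
  simp only [S1SE.models, toSentenceAll, S1SE.sat_allFO, S1SE.sat_imp, S1SE.sat, S1STerm.val,
    Function.update_self]
  constructor
  · rintro h ⟨t, ht⟩
    exact (sat_toS1SE_empty_iff_models φ ht _ _).1 (h (t, 0) ht rfl)
  · intro h p hp hp₀
    rw [hp₀]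
    exact (sat_toS1SE_empty_iff_models φ hp _ _).2 (h ⟨_, hp⟩)

end Models

end HQPTL

theorem s1sE_subsumes_hyperQPTL_general (AP : Type)
    (φ : HQPTL AP) :
    ∃ ψ : S1SE AP, ψ.closed ∧
      ∀ T : Set (Trace AP), HQPTL.models T φ ↔ S1SE.models T ψ := by
  by_cases h₀ : HQPTL.models ∅ φ
  · refine ⟨φ.toSentenceAll, φ.closed_toSentenceAll, fun T => ?_⟩
    rcases T.eq_empty_or_nonempty with rfl | hT <;> simp [HQPTL.models_toSentenceAll, *]
  · refine ⟨φ.toSentenceEx, φ.closed_toSentenceEx, fun T => ?_⟩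
    rcases T.eq_empty_or_nonempty with rfl | hT <;> simp [HQPTL.models_toSentenceEx, *]

/-- S1S[E] is at least as expressive as HyperQPTL. -/
theorem s1sE_subsumes_hyperQPTL (AP : Type) [Fintype AP]
    (φ : HQPTL AP) (hφ : φ.prenex) :
    ∃ ψ : S1SE AP, ψ.closed ∧
      ∀ T : Set (Trace AP), HQPTL.models T φ ↔ S1SE.models T ψ :=
  s1sE_subsumes_hyperQPTL_general AP φ
end

section
/- MPL[E] is at least as expressive as HyperCTL*: for every HyperCTL* formula φ there exists a closed MPL[E] sentence ψ such that for every AP-labeled tree T, T ⊨ φ if and only if T ⊨ ψ. -/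
set_option linter.unusedVariables false

/-! ### Auxiliary development for Statement 5 -/

namespace MPLaux

variable {AP : Type}

/-! #### Path lemmas -/

variable {T : LTree AP}

theorem path_lt {p : ℕ → T.node} (hp : T.InitPath p) {i j : ℕ} (h : i < j) :
    T.lt (p i) (p j) := by
  induction j with
  | zero => omega
  | succ j ih =>
    rcases Nat.lt_succ_iff_lt_or_eq.mp h with h' | h'
    · exact T.lt_trans _ _ _ (ih h') (hp.1 j).1
    · subst h'; exact (hp.1 i).1

theorem path_lt_iff {p : ℕ → T.node} (hp : T.InitPath p) {i j : ℕ} :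
    T.lt (p i) (p j) ↔ i < j := by
  constructor
  · intro h
    by_contra hle
    push_neg at hle
    rcases lt_or_eq_of_le hle with h' | h'
    · exact T.lt_irrefl _ (T.lt_trans _ _ _ h (path_lt hp h'))
    · subst h'; exact T.lt_irrefl _ h
  · exact path_lt hp

theorem path_inj {p : ℕ → T.node} (hp : T.InitPath p) : Function.Injective p := by
  intro i j h
  by_contra hne
  rcases Nat.lt_or_gt_of_ne hne with h' | h'
  · have := path_lt hp h'; rw [h] at this; exact T.lt_irrefl _ this
  · have := path_lt hp h'; rw [h] at this; exact T.lt_irrefl _ this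

theorem path_anc {p : ℕ → T.node} (hp : T.InitPath p) :
    ∀ i a, T.lt a (p i) → ∃ j < i, a = p j := by
  intro i
  induction i with
  | zero =>
    intro a ha
    rw [hp.2] at ha
    rcases T.root_min a with h | h
    · subst h; exact absurd ha (T.lt_irrefl _)
    · exact absurd (T.lt_trans _ _ _ h ha) (T.lt_irrefl _)
  | succ i ih =>
    intro a ha
    have hd := hp.1 i
    rcases T.anc_total _ _ _ ha hd.1 with h | h | h
    · exact ⟨i, Nat.lt_succ_self i, h⟩
    · obtain ⟨j, hj, hj'⟩ := ih a h
      exact ⟨j, by omega, hj'⟩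
    · exact absurd ⟨a, h, ha⟩ hd.2

theorem path_level {p : ℕ → T.node} (hp : T.InitPath p) (i : ℕ) :
    T.level (p i) = i := by
  classical
  have hset : (T.anc_finite (p i)).toFinset = (Finset.range i).image p := by
    ext a
    simp only [Set.Finite.mem_toFinset, Set.mem_setOf_eq, Finset.mem_image, Finset.mem_range]
    constructor
    · intro ha
      obtain ⟨j, hj, rfl⟩ := path_anc hp i a ha
      exact ⟨j, hj, rfl⟩
    · rintro ⟨j, hj, rfl⟩
      exact path_lt hp hj
  unfold LTree.level
  rw [hset, Finset.card_image_of_injective _ (path_inj hp), Finset.card_range]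

theorem path_agree {p q : ℕ → T.node} (hp : T.InitPath p) (hq : T.InitPath q)
    {i : ℕ} (h : p i = q i) : ∀ j ≤ i, p j = q j := by
  intro j hj
  rcases eq_or_lt_of_le hj with rfl | hj'
  · exact h
  · have hlt : T.lt (p j) (q i) := h ▸ path_lt hp hj'
    obtain ⟨k, hk, hk'⟩ := path_anc hq i _ hlt
    have hjk : j = k := by
      have h1 := path_level hp j
      have h2 := path_level hq k
      rw [hk'] at h1; omega
    subst hjk; exact hk'

theorem path_succ_unique {p : ℕ → T.node} (hp : T.InitPath p) {i : ℕ} {y : T.node}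
    (hy : y ∈ Set.range p) (h1 : T.lt (p i) y)
    (h2 : ¬∃ z, T.lt (p i) z ∧ T.lt z y) : y = p (i + 1) := by
  obtain ⟨j, rfl⟩ := hy
  have hij : i < j := (path_lt_iff hp).mp h1
  rcases eq_or_lt_of_le (Nat.succ_le_of_lt hij) with h | h
  · rw [← h]
  · exact absurd ⟨p (i + 1), (hp.1 i).1, path_lt hp h⟩ h2

/-! #### Derived MSO[E] connectives -/

def mand (φ ψ : MSOE AP) : MSOE AP := .not (.or (.not φ) (.not ψ))
def mimp (φ ψ : MSOE AP) : MSOE AP := .or (.not φ) ψ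
def mallFO (x : ℕ) (φ : MSOE AP) : MSOE AP := .not (.exFO x (.not φ))
def mallSO (X : ℕ) (φ : MSOE AP) : MSOE AP := .not (.exSO X (.not φ))

@[simp] theorem sat_mand {T : LTree AP} {SO v1 v2} (φ ψ : MSOE AP) :
    MSOE.sat T SO v1 v2 (mand φ ψ) ↔ MSOE.sat T SO v1 v2 φ ∧ MSOE.sat T SO v1 v2 ψ := by
  simp only [mand, MSOE.sat]; tauto

@[simp] theorem sat_mimp {T : LTree AP} {SO v1 v2} (φ ψ : MSOE AP) :
    MSOE.sat T SO v1 v2 (mimp φ ψ) ↔ (MSOE.sat T SO v1 v2 φ → MSOE.sat T SO v1 v2 ψ) := by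
  simp only [mimp, MSOE.sat]; tauto

@[simp] theorem sat_mallFO {T : LTree AP} {SO v1 v2} (x : ℕ) (φ : MSOE AP) :
    MSOE.sat T SO v1 v2 (mallFO x φ) ↔
      ∀ s : T.node, MSOE.sat T SO (Function.update v1 x s) v2 φ := by
  simp only [mallFO, MSOE.sat]; push_neg; rfl

@[simp] theorem sat_mallSO {T : LTree AP} {SO v1 v2} (X : ℕ) (φ : MSOE AP) :
    MSOE.sat T SO v1 v2 (mallSO X φ) ↔
      ∀ A ∈ SO, MSOE.sat T SO v1 (Function.update v2 X A) φ := by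
  simp only [mallSO, MSOE.sat]; push_neg; rfl

@[simp] theorem freeFO_mand (φ ψ : MSOE AP) :
    (mand φ ψ).freeFO = φ.freeFO ∪ ψ.freeFO := rfl

@[simp] theorem freeSO_mand (φ ψ : MSOE AP) :
    (mand φ ψ).freeSO = φ.freeSO ∪ ψ.freeSO := rfl

@[simp] theorem freeFO_mimp (φ ψ : MSOE AP) :
    (mimp φ ψ).freeFO = φ.freeFO ∪ ψ.freeFO := rfl

@[simp] theorem freeSO_mimp (φ ψ : MSOE AP) :
    (mimp φ ψ).freeSO = φ.freeSO ∪ ψ.freeSO := rfl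

@[simp] theorem freeFO_mallFO (x : ℕ) (φ : MSOE AP) :
    (mallFO x φ).freeFO = φ.freeFO.erase x := rfl

@[simp] theorem freeSO_mallFO (x : ℕ) (φ : MSOE AP) :
    (mallFO x φ).freeSO = φ.freeSO := rfl

@[simp] theorem freeFO_mallSO (X : ℕ) (φ : MSOE AP) :
    (mallSO X φ).freeFO = φ.freeFO := rfl

@[simp] theorem freeSO_mallSO (X : ℕ) (φ : MSOE AP) :
    (mallSO X φ).freeSO = φ.freeSO.erase X := rfl

/-! #### The translation -/

def tr : HCTL AP → (ℕ → ℕ) → ℕ → ℕ → ℕ → MSOE AP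
  | .atom a π, m, e, x, n =>
      .exFO n (mand (.mem n (m π)) (mand (.el n x) (.patom a n)))
  | .not φ, m, e, x, n => .not (tr φ m e x n)
  | .or φ ψ, m, e, x, n => .or (tr φ m e x n) (tr ψ m e x n)
  | .next φ, m, e, x, n =>
      .exFO n (mand (.mem n e) (mand (.lt x n)
        (mand (.not (.exFO (n+1) (mand (.lt x (n+1)) (.lt (n+1) n))))
          (tr φ m e n (n+2)))))
  | .untl φ ψ, m, e, x, n =>
      .exFO n (mand (.mem n e) (mand (.or (.eq x n) (.lt x n))
        (mand (tr ψ m e n (n+2))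
          (.not (.exFO (n+1) (mand (.mem (n+1) e)
            (mand (.or (.eq x (n+1)) (.lt x (n+1)))
              (mand (.lt (n+1) n) (.not (tr φ m e (n+1) (n+2)))))))))))
  | .ex π φ, m, e, x, n =>
      .exSO n (mand (.exFO (n+1) (mand (.mem (n+1) n) (mand (.mem (n+1) e) (.el (n+1) x))))
        (tr φ (Function.update m π n) n x (n+2)))

theorem main (T : LTree AP) (φ : HCTL AP) :
    ∀ (m : ℕ → ℕ) (e x n : ℕ) (V : ℕ → ℕ → T.node) (ε : ℕ → T.node) (i : ℕ)
      (v1 : ℕ → T.node) (v2 : ℕ → Set T.node),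
      T.InitPath ε → (∀ π, T.InitPath (V π)) →
      v1 x = ε i → v2 e = Set.range ε → (∀ π, v2 (m π) = Set.range (V π)) →
      x < n → e < n → (∀ π, m π < n) →
      (HCTL.sat T V ε i φ ↔ MSOE.sat T T.pathSets v1 v2 (tr φ m e x n)) := by
  induction φ with
  | atom a π =>
    intro m e x n V ε i v1 v2 hε hV hx he hm hxn hen hmn
    have e1 : x ≠ n := by omega
    simp only [HCTL.sat, tr, MSOE.sat, mand, not_or, not_not, Function.update_self,
      Function.update_of_ne e1, hx, hm π, path_level hε i]
    constructor
    · intro h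
      exact ⟨V π i, Set.mem_range_self i, path_level (hV π) i, h⟩
    · rintro ⟨s, ⟨j, rfl⟩, hs2, hs3⟩
      rw [path_level (hV π) j] at hs2
      subst hs2; exact hs3
  | not φ ih =>
    intro m e x n V ε i v1 v2 hε hV hx he hm hxn hen hmn
    simp only [HCTL.sat, tr, MSOE.sat]
    rw [ih m e x n V ε i v1 v2 hε hV hx he hm hxn hen hmn]
  | or φ ψ ihφ ihψ =>
    intro m e x n V ε i v1 v2 hε hV hx he hm hxn hen hmn
    simp only [HCTL.sat, tr, MSOE.sat]
    rw [ihφ m e x n V ε i v1 v2 hε hV hx he hm hxn hen hmn,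
        ihψ m e x n V ε i v1 v2 hε hV hx he hm hxn hen hmn]
  | next φ ih =>
    intro m e x n V ε i v1 v2 hε hV hx he hm hxn hen hmn
    have e1 : x ≠ n := by omega
    have e2 : x ≠ n + 1 := by omega
    have e3 : (n : ℕ) ≠ n + 1 := by omega
    simp only [HCTL.sat, tr, MSOE.sat, mand, not_or, not_not, Function.update_self,
      Function.update_of_ne e1, Function.update_of_ne e2, Function.update_of_ne e3,
      hx, he]
    constructor
    · intro h
      refine ⟨ε (i + 1), Set.mem_range_self _, (hε.1 i).1, ?_, ?_⟩
      · rintro ⟨z, hz1, hz2⟩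
        exact (hε.1 i).2 ⟨z, hz1, hz2⟩
      · exact (ih m e n (n + 2) V ε (i + 1) (Function.update v1 n (ε (i + 1))) v2
          hε hV (Function.update_self _ _ _) he hm (by omega) (by omega)
          (fun π => by have := hmn π; omega)).mp h
    · rintro ⟨y, h1, h2, h3, h4⟩
      have hy : y = ε (i + 1) := path_succ_unique hε h1 h2 h3
      subst hy
      exact (ih m e n (n + 2) V ε (i + 1) (Function.update v1 n (ε (i + 1))) v2
        hε hV (Function.update_self _ _ _) he hm (by omega) (by omega)
        (fun π => by have := hmn π; omega)).mpr h4
  | untl φ ψ ihφ ihψ =>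
    intro m e x n V ε i v1 v2 hε hV hx he hm hxn hen hmn
    have e1 : x ≠ n := by omega
    have e2 : x ≠ n + 1 := by omega
    have e3 : (n : ℕ) ≠ n + 1 := by omega
    simp only [HCTL.sat, tr, MSOE.sat, mand, not_or, not_not, Function.update_self,
      Function.update_of_ne e1, Function.update_of_ne e2, Function.update_of_ne e3,
      hx, he]
    constructor
    · rintro ⟨j, hij, hsψ, hall⟩
      refine ⟨ε j, Set.mem_range_self _, ?_, ?_, ?_⟩
      · rcases eq_or_lt_of_le hij with rfl | h
        · exact fun hc => hc.1 rfl
        · exact fun hc => hc.2 (path_lt hε h)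
      · exact (ihψ m e n (n + 2) V ε j (Function.update v1 n (ε j)) v2
          hε hV (Function.update_self _ _ _) he hm (by omega) (by omega)
          (fun π => by have := hmn π; omega)).mp hsψ
      · rintro ⟨z, ⟨k, rfl⟩, hz2, hz3, hz4⟩
        have hik : i ≤ k := by
          rcases not_and_or.mp hz2 with h | h
          · exact le_of_eq (path_inj hε (not_not.mp h))
          · exact le_of_lt ((path_lt_iff hε).mp (not_not.mp h))
        have hkj : k < j := (path_lt_iff hε).mp hz3
        exact hz4 ((ihφ m e (n + 1) (n + 2) V ε k
          (Function.update (Function.update v1 n (ε j)) (n + 1) (ε k)) v2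
          hε hV (Function.update_self _ _ _) he hm (by omega) (by omega)
          (fun π => by have := hmn π; omega)).mp (hall k hik hkj))
    · rintro ⟨y, ⟨j, rfl⟩, h2, h3, h4⟩
      have hij : i ≤ j := by
        rcases not_and_or.mp h2 with h | h
        · exact le_of_eq (path_inj hε (not_not.mp h))
        · exact le_of_lt ((path_lt_iff hε).mp (not_not.mp h))
      refine ⟨j, hij, (ihψ m e n (n + 2) V ε j (Function.update v1 n (ε j)) v2
        hε hV (Function.update_self _ _ _) he hm (by omega) (by omega)
        (fun π => by have := hmn π; omega)).mpr h3, ?_⟩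
      intro k hik hkj
      by_contra hk
      apply h4
      refine ⟨ε k, Set.mem_range_self _, ?_, path_lt hε hkj, ?_⟩
      · rcases eq_or_lt_of_le hik with rfl | h
        · exact fun hc => hc.1 rfl
        · exact fun hc => hc.2 (path_lt hε h)
      · intro hc
        exact hk ((ihφ m e (n + 1) (n + 2) V ε k
          (Function.update (Function.update v1 n (ε j)) (n + 1) (ε k)) v2
          hε hV (Function.update_self _ _ _) he hm (by omega) (by omega)
          (fun π => by have := hmn π; omega)).mpr hc)
  | ex π φ ih =>
    intro m e x n V ε i v1 v2 hε hV hx he hm hxn hen hmn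
    have e1 : x ≠ n + 1 := by omega
    have e2 : e ≠ n := by omega
    simp only [HCTL.sat, tr, MSOE.sat, mand, not_or, not_not, Function.update_self,
      Function.update_of_ne e1, Function.update_of_ne e2, hx, he]
    constructor
    · rintro ⟨p, hp, hagree, hsat⟩
      refine ⟨Set.range p, ⟨p, hp, rfl⟩, ⟨p i, Set.mem_range_self _, ?_, ?_⟩, ?_⟩
      · rw [hagree i le_rfl]; exact Set.mem_range_self _
      · rw [hagree i le_rfl]
      · refine (ih (Function.update m π n) n x (n + 2) (Function.update V π p) p i
          v1 (Function.update v2 n (Set.range p)) hp ?_ ?_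
          (Function.update_self _ _ _) ?_ (by omega) (by omega) ?_).mp hsat
        · intro π'
          by_cases hππ : π' = π
          · subst hππ; rw [Function.update_self]; exact hp
          · rw [Function.update_of_ne hππ]; exact hV π'
        · rw [hx, hagree i le_rfl]
        · intro π'
          by_cases hππ : π' = π
          · subst hππ
            rw [Function.update_self, Function.update_self, Function.update_self]
          · rw [Function.update_of_ne hππ, Function.update_of_ne hππ,
              Function.update_of_ne (show m π' ≠ n by have := hmn π'; omega)]
            exact hm π'
        · intro π'
          by_cases hππ : π' = π
          · subst hππ; rw [Function.update_self]; omega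
          · rw [Function.update_of_ne hππ]; have := hmn π'; omega
    · rintro ⟨A, ⟨p, hp, rfl⟩, ⟨y, ⟨j, rfl⟩, ⟨k, hk⟩, hy3⟩, hsat⟩
      have hji : j = i := by
        have h1 := path_level hp j
        have h2 := path_level hε i
        omega
      have hki : k = i := by
        have h1 := path_level hε k
        have h2 := path_level hp j
        rw [hk] at h1; omega
      have hk' : p i = ε i := by
        calc p i = p j := by rw [hji]
          _ = ε k := hk.symm
          _ = ε i := by rw [hki]
      have hagree : ∀ l ≤ i, p l = ε l := path_agree hp hε hk'
      refine ⟨p, hp, hagree, ?_⟩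
      refine (ih (Function.update m π n) n x (n + 2) (Function.update V π p) p i
        v1 (Function.update v2 n (Set.range p)) hp ?_ ?_
        (Function.update_self _ _ _) ?_ (by omega) (by omega) ?_).mpr hsat
      · intro π'
        by_cases hππ : π' = π
        · subst hππ; rw [Function.update_self]; exact hp
        · rw [Function.update_of_ne hππ]; exact hV π'
      · rw [hx, hagree i le_rfl]
      · intro π'
        by_cases hππ : π' = π
        · subst hππ
          rw [Function.update_self, Function.update_self, Function.update_self]
        · rw [Function.update_of_ne hππ, Function.update_of_ne hππ,
            Function.update_of_ne (show m π' ≠ n by have := hmn π'; omega)]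
          exact hm π'
      · intro π'
        by_cases hππ : π' = π
        · subst hππ; rw [Function.update_self]; omega
        · rw [Function.update_of_ne hππ]; have := hmn π'; omega

theorem freeFO_tr (φ : HCTL AP) :
    ∀ m e x n, ∀ s ∈ (tr φ m e x n).freeFO, s = x := by
  induction φ with
  | atom a π =>
    intro m e x n s hs
    simp only [tr, MSOE.freeFO, freeFO_mand, Finset.mem_erase, Finset.mem_union,
      Finset.mem_insert, Finset.mem_singleton] at hs
    omega
  | not φ ih =>
    intro m e x n s hs
    simp only [tr, MSOE.freeFO] at hs
    exact ih m e x n s hs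
  | or φ ψ ihφ ihψ =>
    intro m e x n s hs
    simp only [tr, MSOE.freeFO, Finset.mem_union] at hs
    rcases hs with hs | hs
    · exact ihφ m e x n s hs
    · exact ihψ m e x n s hs
  | next φ ih =>
    intro m e x n s hs
    simp only [tr, MSOE.freeFO, freeFO_mand, Finset.mem_erase, Finset.mem_union,
      Finset.mem_insert, Finset.mem_singleton] at hs
    have hi := ih m e n (n + 2) s
    tauto
  | untl φ ψ ihφ ihψ =>
    intro m e x n s hs
    simp only [tr, MSOE.freeFO, freeFO_mand, Finset.mem_erase, Finset.mem_union,
      Finset.mem_insert, Finset.mem_singleton] at hs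
    have hiφ := ihφ m e (n + 1) (n + 2) s
    have hiψ := ihψ m e n (n + 2) s
    tauto
  | ex π φ ih =>
    intro m e x n s hs
    simp only [tr, MSOE.freeFO, freeFO_mand, Finset.mem_erase, Finset.mem_union,
      Finset.mem_insert, Finset.mem_singleton] at hs
    have hi := ih (Function.update m π n) n x (n + 2) s
    tauto

theorem freeSO_tr (φ : HCTL AP) :
    ∀ m e x n, ∀ s ∈ (tr φ m e x n).freeSO, s = e ∨ ∃ π, s = m π := by
  induction φ with
  | atom a π =>
    intro m e x n s hs
    simp only [tr, MSOE.freeSO, freeSO_mand, Finset.mem_union, Finset.mem_singleton,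
      Finset.notMem_empty, or_false, false_or] at hs
    exact Or.inr ⟨π, hs⟩
  | not φ ih =>
    intro m e x n s hs
    simp only [tr, MSOE.freeSO] at hs
    exact ih m e x n s hs
  | or φ ψ ihφ ihψ =>
    intro m e x n s hs
    simp only [tr, MSOE.freeSO, Finset.mem_union] at hs
    rcases hs with hs | hs
    · exact ihφ m e x n s hs
    · exact ihψ m e x n s hs
  | next φ ih =>
    intro m e x n s hs
    simp only [tr, MSOE.freeSO, freeSO_mand, Finset.mem_union, Finset.mem_singleton,
      Finset.notMem_empty, or_false, false_or, Finset.union_empty, Finset.empty_union] at hs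
    rcases hs with hs | hs
    · exact Or.inl hs
    · exact ih m e n (n + 2) s hs
  | untl φ ψ ihφ ihψ =>
    intro m e x n s hs
    simp only [tr, MSOE.freeSO, freeSO_mand, Finset.mem_union, Finset.mem_singleton,
      Finset.notMem_empty, or_false, false_or, Finset.union_empty, Finset.empty_union] at hs
    rcases hs with hs | hs | hs | hs
    · exact Or.inl hs
    · exact ihψ m e n (n + 2) s hs
    · exact Or.inl hs
    · exact ihφ m e (n + 1) (n + 2) s hs
  | ex π φ ih =>
    intro m e x n s hs
    simp only [tr, MSOE.freeSO, freeSO_mand, Finset.mem_erase, Finset.mem_union,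
      Finset.mem_singleton, Finset.notMem_empty, or_false, false_or,
      Finset.union_empty, Finset.empty_union] at hs
    obtain ⟨hsn, hs⟩ := hs
    rcases hs with (hs | hs) | hs
    · exact absurd hs hsn
    · exact Or.inl hs
    · rcases ih (Function.update m π n) n x (n + 2) s hs with h | ⟨π', h⟩
      · exact absurd h hsn
      · by_cases hππ : π' = π
        · subst hππ; rw [Function.update_self] at h; exact absurd h hsn
        · rw [Function.update_of_ne hππ] at h
          exact Or.inr ⟨π', h⟩

/-! #### The sentence -/

def trSentence (φ : HCTL AP) : MSOE AP :=
  mallSO 0 (mallFO 1 (mimp (mand (.mem 1 0) (.not (.exFO 2 (.lt 2 1))))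
    (tr φ (fun _ => 0) 0 1 2)))

theorem closed_trSentence (φ : HCTL AP) : (trSentence φ).closed := by
  refine ⟨?_, ?_⟩
  · rw [Finset.eq_empty_iff_forall_notMem]
    intro s hs
    simp only [trSentence, freeFO_mallSO, freeFO_mallFO, freeFO_mimp, freeFO_mand,
      MSOE.freeFO, Finset.mem_erase, Finset.mem_union, Finset.mem_insert,
      Finset.mem_singleton] at hs
    have h := freeFO_tr φ (fun _ => 0) 0 1 2 s
    tauto
  · rw [Finset.eq_empty_iff_forall_notMem]
    intro s hs
    simp only [trSentence, freeSO_mallSO, freeSO_mallFO, freeSO_mimp, freeSO_mand,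
      MSOE.freeSO, Finset.mem_erase, Finset.mem_union, Finset.mem_singleton,
      Finset.notMem_empty, or_false, false_or, Finset.union_empty, Finset.empty_union] at hs
    obtain ⟨hs0, hs⟩ := hs
    rcases hs with hs | hs
    · exact hs0 hs
    · rcases freeSO_tr φ (fun _ => 0) 0 1 2 s hs with h | ⟨π, h⟩
      · exact hs0 h
      · exact hs0 h

end MPLaux

/-- MPL[E] is at least as expressive as HyperCTL*. -/
theorem mplE_subsumes_hyperCTLStar (AP : Type) [Fintype AP] (φ : HCTL AP) :
    ∃ ψ : MSOE AP, ψ.closed ∧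
      ∀ T : LTree AP, HCTL.models T φ ↔ MSOE.modelsMPL T ψ := by
  classical
  refine ⟨MPLaux.trSentence φ, MPLaux.closed_trSentence φ, fun T => ?_⟩
  unfold HCTL.models MSOE.modelsMPL MPLaux.trSentence
  have e1 : (1 : ℕ) ≠ 2 := by omega
  simp only [MSOE.sat, MPLaux.mallSO, MPLaux.mallFO, MPLaux.mimp, MPLaux.mand,
    not_or, not_not, not_exists, not_and, Function.update_self, Function.update_of_ne e1]
  constructor
  · intro h A hA y hy
    obtain ⟨p, hp, rfl⟩ := hA
    obtain ⟨hmem, hq⟩ := _root_.not_imp.mp hy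
    have hroot : ∀ z, ¬ T.lt z y := not_not.mp hq
    obtain ⟨j, rfl⟩ := hmem
    have hj : j = 0 := by
      by_contra hj0
      exact hroot (p 0) (MPLaux.path_lt hp (Nat.pos_of_ne_zero hj0))
    subst hj
    exact (MPLaux.main T φ (fun _ => 0) 0 1 2 (fun _ => p) p 0
      (Function.update (fun _ => T.root) 1 (p 0))
      (Function.update (fun _ => ∅) 0 (Set.range p))
      hp (fun _ => hp) (Function.update_self _ _ _) (Function.update_self _ _ _)
      (fun _ => Function.update_self _ _ _) (by omega) (by omega)
      (fun _ => by show (0:ℕ) < 2; omega)).mp (h p hp)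
  · intro h p hp
    have hy : ∀ z, ¬ T.lt z (p 0) := by
      rw [hp.2]
      intro z hz
      rcases T.root_min z with rfl | h'
      · exact T.lt_irrefl _ hz
      · exact T.lt_irrefl _ (T.lt_trans _ _ _ h' hz)
    have hsat := h (Set.range p) ⟨p, hp, rfl⟩ (p 0)
      (_root_.not_imp.mpr ⟨Set.mem_range_self 0, not_not.mpr hy⟩)
    exact (MPLaux.main T φ (fun _ => 0) 0 1 2 (fun _ => p) p 0
      (Function.update (fun _ => T.root) 1 (p 0))
      (Function.update (fun _ => ∅) 0 (Set.range p))
      hp (fun _ => hp) (Function.update_self _ _ _) (Function.update_self _ _ _)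
      (fun _ => Function.update_self _ _ _) (by omega) (by omega)
      (fun _ => by show (0:ℕ) < 2; omega)).mpr hsat
end
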